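/- arXiv:1703.06089 — 6 statements merged into one kernel-verified Lean document; each statement's English description precedes it below -/
import Mathlib

section
/- Let P, Q ∈ B be points of infinite order. Then the following are equivalent: (i) for almost every v ∈ V there exist coprime integers x, y and a torsion point T ∈ B_tors (all possibly depending on v) such that x²P + y²Q = T mod v; (ii) there exist coprime integers x, y and a torsion point T ∈ B_tors such that x²P + y²Q = T in B. -/
/-!
Multiplying by the exponent `t` of `B_tors` removes the torsion point: the local condition becomes
`x² (tP) + y² (tQ) = 0 mod v`. If `P` and `Q` are independent, assumption (1) gives infinitely
many `v` at which `tP` has order `2 · odd` and `tQ` order `4 · odd`, and there a solution forces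
both `x` and `y` to be even. Otherwise `a P + b Q` is torsion for some coprime `a, b`, so
`tP = -b S` and `tQ = a S` with `S` of infinite order, and the local condition says
`ord_v S ∣ a y² - b x²`. Either the form `a Y² - b X²` has a primitive zero, which gives (ii), or
some `l ^ K` divides none of its values at coprime `x, y`: take `l` where `a` or `b` has odd
valuation, or, when `a = e²`, `b = -f²` up to a common sign, a prime `l ≡ 3 mod 4` not dividing
`e f`. Assumption (1) for `S` then provides infinitely many `v` with `l ^ K ∣ ord_v S`, where the
local condition fails.
-/

theorem Prime.pow_succ_dvd_of_pow_dvd_sq {R : Type*} [CommMonoidWithZero R] [IsCancelMulZero R]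
    {p y : R} (hp : Prime p) {k : ℕ} (h : p ^ (2 * k + 1) ∣ y ^ 2) : p ^ (k + 1) ∣ y := by
  rw [pow_dvd_iff_le_emultiplicity, emultiplicity_pow hp] at h
  rw [pow_dvd_iff_le_emultiplicity]
  generalize emultiplicity p y = m at h ⊢
  cases m with
  | top => simp
  | coe m => norm_cast at h ⊢; omega

theorem Prime.not_pow_succ_dvd_mul_sq_sub {R : Type*} [CommRing R] [IsDomain R] {l a b x y : R}
    (hl : Prime l) {e : ℕ} (he : Odd e) (ha : ¬ l ∣ a) (hb : ¬ l ∣ b) (hxy : IsCoprime x y) :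
    ¬ l ^ (e + 1) ∣ a * y ^ 2 - l ^ e * b * x ^ 2 := by
  obtain ⟨k, rfl⟩ := he
  intro H
  have hay : l ^ (2 * k + 1) ∣ a * y ^ 2 :=
    (dvd_sub_left ((dvd_mul_right _ b).mul_right _)).mp ((pow_dvd_pow l (Nat.le_succ _)).trans H)
  have hy : l ^ (k + 1) ∣ y := hl.pow_succ_dvd_of_pow_dvd_sq (hl.pow_dvd_of_dvd_mul_left _ ha hay)
  have hay' : l ^ (2 * k + 1 + 1) ∣ a * y ^ 2 := by
    rw [show 2 * k + 1 + 1 = (k + 1) * 2 by ring, pow_mul]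
    exact (pow_dvd_pow_of_dvd hy 2).mul_left a
  have hbx : l ∣ b * x ^ 2 := by
    have := (dvd_sub_right hay').mp H
    rw [pow_succ, mul_assoc] at this
    exact (mul_dvd_mul_iff_left (pow_ne_zero _ hl.ne_zero)).mp this
  have hx : l ∣ x := hl.dvd_of_dvd_pow ((hl.dvd_or_dvd hbx).resolve_left hb)
  exact hl.not_isUnit (hxy.isUnit_of_dvd' hx ((dvd_pow_self l k.succ_ne_zero).trans hy))

theorem Int.not_dvd_sq_add_sq_of_mod_four_eq_three {q : ℕ} (hq : q.Prime) (hq3 : q % 4 = 3)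
    {e f x y : ℤ} (he : ¬ (q : ℤ) ∣ e) (hf : ¬ (q : ℤ) ∣ f) (hxy : IsCoprime x y) :
    ¬ (q : ℤ) ∣ (e * y) ^ 2 + (f * x) ^ 2 := by
  have := Fact.mk hq
  have hqZ : Prime (q : ℤ) := Nat.prime_iff_prime_int.mp hq
  intro H
  by_cases hx : (q : ℤ) ∣ x
  · have hey : (q : ℤ) ∣ e * y :=
      hqZ.dvd_of_dvd_pow ((dvd_add_left ((hx.mul_left f).pow two_ne_zero)).mp H)
    exact hqZ.not_isUnit (hxy.isUnit_of_dvd' hx ((hqZ.dvd_or_dvd hey).resolve_left he))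
  · refine ZMod.mod_four_ne_three_of_sq_eq_neg_sq' (x := ((e * y : ℤ) : ZMod q))
      (y := ((f * x : ℤ) : ZMod q)) ?_ ?_ hq3
    · rw [ne_eq, ZMod.intCast_zmod_eq_zero_iff_dvd]
      exact fun h => (hqZ.dvd_or_dvd h).elim hf hx
    · rw [← ZMod.intCast_zmod_eq_zero_iff_dvd] at H
      push_cast at H ⊢
      exact eq_neg_of_add_eq_zero_left H

theorem Int.exists_prime_not_dvd_sq_add_sq {e f : ℤ} (he : e ≠ 0) (hf : f ≠ 0) :
    ∃ q : ℕ, q.Prime ∧ ∀ x y : ℤ, IsCoprime x y → ¬ (q : ℤ) ∣ (e * y) ^ 2 + (f * x) ^ 2 := by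
  obtain ⟨q, hqef, hq, hq3⟩ := Nat.forall_exists_prime_gt_and_modEq (e * f).natAbs
    (q := 4) (a := 3) (by norm_num) (by norm_num)
  have hndvd : ∀ g : ℤ, g ≠ 0 → g ∣ e * f → ¬ (q : ℤ) ∣ g := fun g hg hgef hqg => by
    have := Nat.le_of_dvd (Int.natAbs_pos.mpr (mul_ne_zero he hf))
      (Int.natAbs_dvd_natAbs.mpr (hqg.trans hgef))
    simp only [Int.natAbs_natCast] at this
    omega
  exact ⟨q, hq, fun x y => not_dvd_sq_add_sq_of_mod_four_eq_three hq hq3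
    (hndvd e he (dvd_mul_right e f)) (hndvd f hf (dvd_mul_left f e))⟩

theorem Nat.isSquare_of_even_factorization {n : ℕ}
    (h : ∀ p, p.Prime → Even (n.factorization p)) : IsSquare n := by
  rcases eq_or_ne n 0 with rfl | hn
  · exact ⟨0, rfl⟩
  refine ⟨n.factorization.prod fun p e => p ^ (e / 2), ?_⟩
  conv_lhs => rw [← Nat.prod_factorization_pow_eq_self hn]
  rw [Finsupp.prod, Finsupp.prod, ← Finset.prod_mul_distrib]
  refine Finset.prod_congr rfl fun p hp => ?_
  rw [Nat.support_factorization] at hp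
  obtain ⟨k, hk⟩ := h p (Nat.prime_of_mem_primeFactors hp)
  rw [← pow_add]
  congr 1
  omega

theorem Int.exists_eq_sq_or_eq_neg_sq_of_even_factorization {a : ℤ}
    (h : ∀ p, p.Prime → Even (a.natAbs.factorization p)) : ∃ e : ℤ, a = e ^ 2 ∨ a = -e ^ 2 := by
  obtain ⟨n, hn⟩ := Nat.isSquare_of_even_factorization h
  refine ⟨n, ?_⟩
  rcases Int.natAbs_eq a with ha | ha <;> rw [ha, hn] <;> push_cast <;> ring_nf <;> simp

theorem Int.not_pow_succ_dvd_mul_sq_sub_mul_sq_of_odd_factorization {a b : ℤ}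
    (hab : IsCoprime a b) {l : ℕ} (hl : l.Prime) (hodd : Odd (a.natAbs.factorization l))
    {x y : ℤ} (hxy : IsCoprime x y) :
    ¬ (l : ℤ) ^ (a.natAbs.factorization l + 1) ∣ a * y ^ 2 - b * x ^ 2 := by
  have ha : a ≠ 0 := by rintro rfl; simp at hodd
  have hlZ : Prime (l : ℤ) := Nat.prime_iff_prime_int.mp hl
  generalize he : a.natAbs.factorization l = e at hodd ⊢
  obtain ⟨a', rfl⟩ : (l : ℤ) ^ e ∣ a := by
    rw [← Int.natAbs_dvd_natAbs, ← he]
    simpa using Nat.ordProj_dvd a.natAbs l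
  have ha' : ¬ (l : ℤ) ∣ a' := fun h => by
    refine Nat.pow_succ_factorization_not_dvd (Int.natAbs_ne_zero.mpr ha) hl ?_
    rw [he, ← Int.natCast_dvd_natCast, Int.natCast_natAbs, dvd_abs, pow_succ]
    push_cast
    exact mul_dvd_mul_left _ h
  have hb : ¬ (l : ℤ) ∣ b := fun h =>
    hlZ.not_isUnit (hab.isUnit_of_dvd' ((dvd_pow_self _ hodd.pos.ne').mul_right a') h)
  rw [← dvd_neg, neg_sub]
  exact hlZ.not_pow_succ_dvd_mul_sq_sub hodd hb ha' hxy.symm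

/-- The local-global principle for primitive zeros of the binary form `a Y² - b X²`. -/
theorem Int.exists_isCoprime_mul_sq_eq_or_exists_prime_pow_not_dvd {a b : ℤ}
    (hab : IsCoprime a b) :
    (∃ x y : ℤ, IsCoprime x y ∧ a * y ^ 2 = b * x ^ 2) ∨
      ∃ l K : ℕ, l.Prime ∧ ∀ x y : ℤ, IsCoprime x y → ¬ (l : ℤ) ^ K ∣ a * y ^ 2 - b * x ^ 2 := by
  rcases eq_or_ne a 0 with rfl | ha
  · exact .inl ⟨0, 1, isCoprime_zero_left.mpr isUnit_one, by ring⟩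
  rcases eq_or_ne b 0 with rfl | hb
  · exact .inl ⟨1, 0, isCoprime_zero_right.mpr isUnit_one, by ring⟩
  by_cases hoa : ∃ l, l.Prime ∧ Odd (a.natAbs.factorization l)
  · obtain ⟨l, hl, hodd⟩ := hoa
    exact .inr ⟨l, _, hl, fun x y hxy =>
      not_pow_succ_dvd_mul_sq_sub_mul_sq_of_odd_factorization hab hl hodd hxy⟩
  by_cases hob : ∃ l, l.Prime ∧ Odd (b.natAbs.factorization l)
  · obtain ⟨l, hl, hodd⟩ := hob
    refine .inr ⟨l, b.natAbs.factorization l + 1, hl, fun x y hxy => ?_⟩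
    rw [← dvd_neg, neg_sub]
    exact not_pow_succ_dvd_mul_sq_sub_mul_sq_of_odd_factorization hab.symm hl hodd hxy.symm
  obtain ⟨e, he⟩ := exists_eq_sq_or_eq_neg_sq_of_even_factorization fun p hp =>
    Nat.not_odd_iff_even.mp fun h => hoa ⟨p, hp, h⟩
  obtain ⟨f, hf⟩ := exists_eq_sq_or_eq_neg_sq_of_even_factorization fun p hp =>
    Nat.not_odd_iff_even.mp fun h => hob ⟨p, hp, h⟩
  have hef : IsCoprime e f := by
    refine (IsCoprime.pow_iff two_pos two_pos).mp ?_
    rcases he with rfl | rfl <;> rcases hf with rfl | rfl <;>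
      simpa only [IsCoprime.neg_left_iff, IsCoprime.neg_right_iff] using hab
  have he0 : e ≠ 0 := by rintro rfl; simp_all
  have hf0 : f ≠ 0 := by rintro rfl; simp_all
  obtain ⟨q, hq, hobs⟩ := exists_prime_not_dvd_sq_add_sq he0 hf0
  rcases he with rfl | rfl <;> rcases hf with rfl | rfl
  · exact .inl ⟨e, f, hef, by ring⟩
  · refine .inr ⟨q, 1, hq, fun x y hxy => ?_⟩
    rw [pow_one, show e ^ 2 * y ^ 2 - -f ^ 2 * x ^ 2 = (e * y) ^ 2 + (f * x) ^ 2 by ring]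
    exact hobs x y hxy
  · refine .inr ⟨q, 1, hq, fun x y hxy => ?_⟩
    rw [pow_one, ← dvd_neg,
      show -(-e ^ 2 * y ^ 2 - f ^ 2 * x ^ 2) = (e * y) ^ 2 + (f * x) ^ 2 by ring]
    exact hobs x y hxy
  · exact .inl ⟨e, f, hef, by ring⟩

theorem Nat.exists_eq_pow_mul_and_not_dvd_of_not_pow_succ_dvd {p n k : ℕ} (h : p ^ k ∣ n)
    (h' : ¬ p ^ (k + 1) ∣ n) : ∃ m, ¬ p ∣ m ∧ n = p ^ k * m := by
  obtain ⟨m, rfl⟩ := h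
  exact ⟨m, fun hm => h' (by rw [pow_succ]; exact mul_dvd_mul_left _ hm), rfl⟩

section AddCommGroup

variable {B : Type*} [AddCommGroup B]

theorem exists_pos_nsmul_eq_zero_of_finite_torsion (h : {T : B | IsOfFinAddOrder T}.Finite) :
    ∃ t : ℕ, 0 < t ∧ ∀ T : B, IsOfFinAddOrder T → t • T = 0 := by
  have : Finite (AddCommGroup.torsion B) := h.to_subtype
  exact ⟨AddMonoid.exponent (AddCommGroup.torsion B),
    Nat.pos_of_ne_zero AddMonoid.exponent_ne_zero_of_finite, fun T hT =>
      congrArg Subtype.val (AddMonoid.exponent_nsmul_eq_zero (⟨T, hT⟩ : AddCommGroup.torsion B))⟩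

theorem LinearIndependent.pair_nsmul {P Q : B} (h : LinearIndependent ℤ ![P, Q]) {t : ℕ}
    (ht : t ≠ 0) : LinearIndependent ℤ ![t • P, t • Q] := by
  rw [LinearIndependent.pair_iff] at h ⊢
  intro s u hsu
  have := h (s * t) (u * t) (by rwa [mul_smul, mul_smul, natCast_zsmul, natCast_zsmul])
  simpa [ht] using this

theorem linearIndependent_singleton_of_not_isOfFinAddOrder {S : B} (hS : ¬ IsOfFinAddOrder S) :
    LinearIndependent ℤ ![S] := by
  rw [Fintype.linearIndependent_iff]
  intro g hg i
  fin_cases i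
  by_contra hne
  exact hS (isOfFinAddOrder_iff_zsmul_eq_zero.mpr ⟨g 0, hne, by simpa using hg⟩)

theorem exists_isCoprime_isOfFinAddOrder_of_not_linearIndependent {P Q : B}
    (h : ¬ LinearIndependent ℤ ![P, Q]) :
    ∃ a b : ℤ, IsCoprime a b ∧ IsOfFinAddOrder (a • P + b • Q) := by
  simp only [LinearIndependent.pair_iff, not_forall, not_and_or] at h
  obtain ⟨s, u, hsu, hne⟩ := h
  obtain ⟨g, a, b, hg, hab, rfl, rfl⟩ := Int.exists_gcd_one' (Int.gcd_pos_iff.mpr hne)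
  refine ⟨a, b, Int.isCoprime_iff_gcd_eq_one.mpr hab,
    isOfFinAddOrder_iff_nsmul_eq_zero.mpr ⟨g, hg, ?_⟩⟩
  rw [← hsu, smul_add, smul_comm, smul_comm g b, ← natCast_zsmul, ← natCast_zsmul, smul_smul,
    smul_smul]

theorem exists_eq_smul_of_isCoprime {a b : ℤ} (hab : IsCoprime a b) {P Q : B}
    (h : a • P + b • Q = 0) : ∃ S : B, P = (-b) • S ∧ Q = a • S := by
  obtain ⟨u, w, huw⟩ := hab
  refine ⟨u • Q - w • P, ?_, ?_⟩
  · linear_combination (norm := module) u • h - huw • P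
  · linear_combination (norm := module) w • h - huw • Q

theorem sq_smul_add_sq_smul_ne_zero {g₁ g₂ : B} {m₁ m₂ : ℕ}
    (h₁ : addOrderOf g₁ = 2 ^ 1 * m₁) (h₂ : addOrderOf g₂ = 2 ^ 2 * m₂)
    (hm₁ : ¬ 2 ∣ m₁) (hm₂ : ¬ 2 ∣ m₂) {x y : ℤ} (hxy : IsCoprime x y) :
    x ^ 2 • g₁ + y ^ 2 • g₂ ≠ 0 := by
  intro h
  have key : ∀ c : ℤ, (addOrderOf g₁ : ℤ) ∣ c * x ^ 2 ↔ (addOrderOf g₂ : ℤ) ∣ c * y ^ 2 := by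
    intro c
    rw [addOrderOf_dvd_iff_zsmul_eq_zero, addOrderOf_dvd_iff_zsmul_eq_zero, mul_smul, mul_smul,
      eq_neg_of_add_eq_zero_left h, smul_neg, neg_eq_zero]
  rw [h₁, h₂] at key
  push_cast at key
  have hm₁' : ¬ (2 : ℤ) ∣ m₁ := by exact_mod_cast hm₁
  have hm₂' : ¬ (2 : ℤ) ∣ m₂ := by exact_mod_cast hm₂
  have hm₁0 : (m₁ : ℤ) ≠ 0 := fun h0 => hm₁' (h0 ▸ dvd_zero 2)
  have hm₂0 : (m₂ : ℤ) ≠ 0 := fun h0 => hm₂' (h0 ▸ dvd_zero 2)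
  have hy : (2 : ℤ) ∣ y := by
    obtain ⟨k, hk⟩ := (key (2 * m₁ * m₂)).mp ⟨m₂ * x ^ 2, by ring⟩
    have : (2 : ℤ) ∣ m₁ * y ^ 2 :=
      ⟨k, mul_left_cancel₀ (mul_ne_zero two_ne_zero hm₂0) (by linear_combination hk)⟩
    exact Int.prime_two.dvd_of_dvd_pow ((Int.prime_two.dvd_or_dvd this).resolve_left hm₁')
  obtain ⟨y, rfl⟩ := hy
  have hx : (2 : ℤ) ∣ x := by
    obtain ⟨k, hk⟩ := (key (m₁ * m₂)).mpr ⟨m₁ * y ^ 2, by ring⟩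
    have : (2 : ℤ) ∣ m₂ * x ^ 2 := ⟨k, mul_left_cancel₀ hm₁0 (by linear_combination hk)⟩
    exact Int.prime_two.dvd_of_dvd_pow ((Int.prime_two.dvd_or_dvd this).resolve_left hm₂')
  exact Int.prime_two.not_isUnit (hxy.isUnit_of_dvd' hx (dvd_mul_right 2 y))

theorem sq_smul_map_nsmul_add_eq_zero {C : Type*} [AddCommGroup C] (φ : B →+ C) {t : ℕ}
    (ht : ∀ T : B, IsOfFinAddOrder T → t • T = 0) {P Q T : B} (hT : IsOfFinAddOrder T)
    {x y : ℤ} (h : φ (x ^ 2 • P + y ^ 2 • Q) = φ T) :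
    x ^ 2 • φ (t • P) + y ^ 2 • φ (t • Q) = 0 := by
  have := congrArg (t • ·) h
  simp only [← map_nsmul, ht T hT, map_zero, smul_add, smul_comm t] at this
  simpa only [map_add, map_zsmul] using this

end AddCommGroup

theorem stmt_0_general
    {V : Type*}
    {B : Type*} [AddCommGroup B]
    (Bv : V → Type*) [∀ v, AddCommGroup (Bv v)]
    (r : ∀ v : V, B →+ Bv v)
    (htors : {T : B | IsOfFinAddOrder T}.Finite)
    (h1 : ∀ l : ℕ, l.Prime → ∀ (m : ℕ) (Pts : Fin m → B), LinearIndependent ℤ Pts →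
      ∀ k : Fin m → ℕ,
        {v : V | ∀ i : Fin m,
          l ^ (k i) ∣ addOrderOf (r v (Pts i)) ∧
          ¬ l ^ (k i + 1) ∣ addOrderOf (r v (Pts i))}.Infinite)
    (P Q : B) (hP : ¬ IsOfFinAddOrder P) :
    {v : V | ¬ ∃ (x y : ℤ) (T : B), IsCoprime x y ∧ IsOfFinAddOrder T ∧
        r v (x ^ 2 • P + y ^ 2 • Q) = r v T}.Finite
      ↔
    ∃ (x y : ℤ) (T : B), IsCoprime x y ∧ IsOfFinAddOrder T ∧
        x ^ 2 • P + y ^ 2 • Q = T := by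
  refine ⟨fun hloc => ?_, fun ⟨x, y, T, hxy, hT, h⟩ =>
    Set.finite_empty.subset fun v hv => hv ⟨x, y, T, hxy, hT, by rw [h]⟩⟩
  obtain ⟨t, ht, htT⟩ := exists_pos_nsmul_eq_zero_of_finite_torsion htors
  have hloc' : {v | ¬ ∃ x y : ℤ, IsCoprime x y ∧
      x ^ 2 • r v (t • P) + y ^ 2 • r v (t • Q) = 0}.Finite :=
    hloc.subset fun v hv ⟨x, y, T, hxy, hT, hv'⟩ =>
      hv ⟨x, y, hxy, sq_smul_map_nsmul_add_eq_zero (r v) htT hT hv'⟩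
  by_cases hPQ : LinearIndependent ℤ ![P, Q]
  · refine absurd hloc' ((h1 2 Nat.prime_two 2 _ (hPQ.pair_nsmul ht.ne') ![1, 2]).mono
      fun v hv => ?_)
    rintro ⟨x, y, hxy, h⟩
    obtain ⟨m₁, hm₁, h₁⟩ := Nat.exists_eq_pow_mul_and_not_dvd_of_not_pow_succ_dvd (hv 0).1 (hv 0).2
    obtain ⟨m₂, hm₂, h₂⟩ := Nat.exists_eq_pow_mul_and_not_dvd_of_not_pow_succ_dvd (hv 1).1 (hv 1).2
    exact sq_smul_add_sq_smul_ne_zero h₁ h₂ hm₁ hm₂ hxy h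
  obtain ⟨a, b, hab, hR⟩ := exists_isCoprime_isOfFinAddOrder_of_not_linearIndependent hPQ
  obtain ⟨S, hPS, hQS⟩ := exists_eq_smul_of_isCoprime hab (P := t • P) (Q := t • Q)
    (by rw [← htT _ hR, smul_add, smul_comm t a, smul_comm t b])
  have hform : ∀ x y : ℤ, x ^ 2 • t • P + y ^ 2 • t • Q = (a * y ^ 2 - b * x ^ 2) • S := by
    intro x y
    rw [hPS, hQS]
    module
  have hS : ¬ IsOfFinAddOrder S := fun h => hP ((hPS ▸ h.zsmul).of_nsmul ht.ne')
  rcases Int.exists_isCoprime_mul_sq_eq_or_exists_prime_pow_not_dvd hab with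
    ⟨x, y, hxy, hzero⟩ | ⟨l, K, hl, hobs⟩
  · refine ⟨x, y, _, hxy, IsOfFinAddOrder.of_nsmul (n := t) ?_ ht.ne', rfl⟩
    rw [smul_add, smul_comm t, smul_comm t, hform, hzero, sub_self, zero_smul]
    exact IsOfFinAddOrder.zero
  refine absurd hloc' ((h1 l hl 1 ![S] (linearIndependent_singleton_of_not_isOfFinAddOrder hS)
    ![K]).mono fun v hv => ?_)
  rintro ⟨x, y, hxy, h⟩
  refine hobs x y hxy ((Int.natCast_dvd_natCast.mpr (hv 0).1).trans ?_)
  rw [addOrderOf_dvd_iff_zsmul_eq_zero, Matrix.cons_val_zero, ← map_zsmul, ← hform, map_add,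
    map_zsmul, map_zsmul]
  exact h

/-- Hasse–Minkowski for rank-2 quadratic forms on Mordell–Weil type groups.
`B` is an abelian group with finite torsion, `r v : B →+ Bv v` a family of
reduction maps into finite abelian groups indexed by an infinite set `V`,
satisfying Assumptions (1) and (2). -/
theorem stmt_0
    {V : Type*} [Infinite V]
    {B : Type*} [AddCommGroup B]
    (Bv : V → Type*) [∀ v, AddCommGroup (Bv v)] [∀ v, Finite (Bv v)]
    (r : ∀ v : V, B →+ Bv v)
    (htors : {T : B | IsOfFinAddOrder T}.Finite)
    (h1 : ∀ l : ℕ, l.Prime → ∀ (m : ℕ) (Pts : Fin m → B), LinearIndependent ℤ Pts →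
      ∀ k : Fin m → ℕ,
        {v : V | ∀ i : Fin m,
          l ^ (k i) ∣ addOrderOf (r v (Pts i)) ∧
          ¬ l ^ (k i + 1) ∣ addOrderOf (r v (Pts i))}.Infinite)
    (h2 : {v : V | ¬ Set.InjOn (r v) {T : B | IsOfFinAddOrder T}}.Finite)
    (P Q : B) (hP : ¬ IsOfFinAddOrder P) (hQ : ¬ IsOfFinAddOrder Q) :
    {v : V | ¬ ∃ (x y : ℤ) (T : B), IsCoprime x y ∧ IsOfFinAddOrder T ∧
        r v (x ^ 2 • P + y ^ 2 • Q) = r v T}.Finite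
      ↔
    ∃ (x y : ℤ) (T : B), IsCoprime x y ∧ IsOfFinAddOrder T ∧
        x ^ 2 • P + y ^ 2 • Q = T :=
  stmt_0_general Bv r htors h1 P Q hP
end

section
/- Let P, Q ∈ B be points of infinite order. If for almost every v ∈ V there exist coprime integers x, y and a torsion point T ∈ B_tors (all possibly depending on v) such that x²P + y²Q = T mod v, then P and Q are linearly dependent over ℤ; that is, there exist nonzero integers a, b with aP + bQ = 0. -/
/-!
Multiplying by an integer `N` that kills the finitely many torsion points turns the hypothesis into
`x² • N P + y² • N Q = 0 mod v`. If `P` and `Q` were independent, so would be `N P` and `N Q`, and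
one could pick `v` with `4 ∥ ord_v (N P)` and `2 ∥ ord_v (N Q)`. Comparing the `2`-parts of the
orders on both sides of the relation then forces `2 ∣ x` and `2 ∣ y`, contradicting `gcd(x, y) = 1`.
-/

theorem exists_nsmul_eq_zero_of_finite {G : Type*} [AddMonoid G] {s : Set G} (hs : s.Finite)
    (htors : ∀ T ∈ s, IsOfFinAddOrder T) : ∃ N : ℕ, N ≠ 0 ∧ ∀ T ∈ s, N • T = 0 :=
  ⟨hs.toFinset.lcm addOrderOf,
    Finset.lcm_ne_zero_iff.mpr fun T hT => (htors T (hs.mem_toFinset.mp hT)).addOrderOf_pos.ne',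
    fun _ hT => addOrderOf_dvd_iff_nsmul_eq_zero.mp (Finset.dvd_lcm (hs.mem_toFinset.mpr hT))⟩

theorem linearIndependent_nsmul_pair {B : Type*} [AddCommGroup B] {P Q : B}
    (hP : ¬ IsOfFinAddOrder P) (hQ : ¬ IsOfFinAddOrder Q)
    (hindep : ∀ a b : ℤ, a ≠ 0 → b ≠ 0 → a • P + b • Q ≠ 0) {N : ℕ} (hN : N ≠ 0) :
    LinearIndependent ℤ ![N • P, N • Q] := by
  have hN' : (N : ℤ) ≠ 0 := Nat.cast_ne_zero.mpr hN
  rw [LinearIndependent.pair_iff]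
  intro s t hst
  simp only [← natCast_zsmul, smul_smul] at hst
  by_cases hs : s = 0 <;> by_cases ht : t = 0
  · exact ⟨hs, ht⟩
  · subst hs
    exact (hQ (isOfFinAddOrder_iff_zsmul_eq_zero.mpr
      ⟨t * N, mul_ne_zero ht hN', by simpa using hst⟩)).elim
  · subst ht
    exact (hP (isOfFinAddOrder_iff_zsmul_eq_zero.mpr
      ⟨s * N, mul_ne_zero hs hN', by simpa using hst⟩)).elim
  · exact (hindep _ _ (mul_ne_zero hs hN') (mul_ne_zero ht hN') hst).elim

theorem Prime.dvd_of_dvd_mul_sq {M : Type*} [CommMonoidWithZero M] {p c x : M} (hp : Prime p)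
    (hc : ¬ p ∣ c) (h : p ∣ c * x ^ 2) : p ∣ x :=
  hp.dvd_of_dvd_pow ((hp.dvd_or_dvd h).resolve_left hc)

theorem prime_dvd_of_sq_zsmul_add_sq_zsmul_eq_zero {G : Type*} [AddCommGroup G] {p : ℕ}
    (hp : p.Prime) {R S : G} (hR : p ^ 2 ∣ addOrderOf R) (hR' : ¬ p ^ 3 ∣ addOrderOf R)
    (hS : p ∣ addOrderOf S) (hS' : ¬ p ^ 2 ∣ addOrderOf S) {x y : ℤ}
    (h : x ^ 2 • R + y ^ 2 • S = 0) : (p : ℤ) ∣ x ∧ (p : ℤ) ∣ y := by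
  have hpZ : Prime (p : ℤ) := Nat.prime_iff_prime_int.mp hp
  obtain ⟨a, ha⟩ := hR
  obtain ⟨c, hc⟩ := hS
  have ha' : ¬ (p : ℤ) ∣ a := by
    rw [Int.natCast_dvd_natCast]
    rintro ⟨d, rfl⟩
    exact hR' ⟨d, by rw [ha]; ring⟩
  have hc' : ¬ (p : ℤ) ∣ c := by
    rw [Int.natCast_dvd_natCast]
    rintro ⟨d, rfl⟩
    exact hS' ⟨d, by rw [hc]; ring⟩
  have hRx : x ^ 2 • R = -(y ^ 2 • S) := eq_neg_of_add_eq_zero_left h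
  have hSy : y ^ 2 • S = -(x ^ 2 • R) := eq_neg_of_add_eq_zero_right h
  -- `ord S • x² R = 0` gives `p² ∣ p c x²`, so `p ∣ x` since `p ∤ c`
  have hx : (p : ℤ) ∣ x := by
    have hdvd : (addOrderOf R : ℤ) ∣ addOrderOf S * x ^ 2 := by
      rw [addOrderOf_dvd_iff_zsmul_eq_zero, mul_smul, hRx, smul_neg, smul_comm, natCast_zsmul,
        addOrderOf_nsmul_eq_zero, smul_zero, neg_zero]
    rw [ha, hc] at hdvd
    push_cast at hdvd
    have hpcx : (p : ℤ) * p ∣ p * (c * x ^ 2) := by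
      rw [← mul_assoc, ← sq]
      exact dvd_trans (dvd_mul_right _ _) hdvd
    have := (mul_dvd_mul_iff_left (Nat.cast_ne_zero.mpr hp.ne_zero)).mp hpcx
    exact hpZ.dvd_of_dvd_mul_sq hc' this
  -- with `x = p e`, `a x² R = e² ord R • R = 0`, so `ord S = p c ∣ a y²` and `p ∣ y` since `p ∤ a`
  obtain ⟨e, rfl⟩ := hx
  have haR : (a * (p * e) ^ 2 : ℤ) • R = 0 := by
    have : (a * (p * e) ^ 2 : ℤ) = e ^ 2 * (addOrderOf R : ℤ) := by rw [ha]; push_cast; ring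
    rw [this, mul_smul, natCast_zsmul, addOrderOf_nsmul_eq_zero, smul_zero]
  have hdvd : (addOrderOf S : ℤ) ∣ a * y ^ 2 := by
    rw [addOrderOf_dvd_iff_zsmul_eq_zero, mul_smul, hSy, smul_neg, ← mul_smul, haR, neg_zero]
  have hpS : (p : ℤ) ∣ addOrderOf S := Int.natCast_dvd_natCast.mpr ⟨c, hc⟩
  exact ⟨dvd_mul_right _ _, hpZ.dvd_of_dvd_mul_sq ha' (hpS.trans hdvd)⟩

theorem stmt_1_general
    {V : Type*}
    {B : Type*} [AddCommGroup B]
    (Bv : V → Type*) [∀ v, AddCommGroup (Bv v)]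
    (r : ∀ v : V, B →+ Bv v)
    (htors : {T : B | IsOfFinAddOrder T}.Finite)
    (h1 : ∀ l : ℕ, l.Prime → ∀ (m : ℕ) (Pts : Fin m → B), LinearIndependent ℤ Pts →
      ∀ k : Fin m → ℕ,
        {v : V | ∀ i : Fin m,
          l ^ (k i) ∣ addOrderOf (r v (Pts i)) ∧
          ¬ l ^ (k i + 1) ∣ addOrderOf (r v (Pts i))}.Infinite)
    (P Q : B) (hP : ¬ IsOfFinAddOrder P) (hQ : ¬ IsOfFinAddOrder Q)
    (h : {v : V | ¬ ∃ (x y : ℤ) (T : B), IsCoprime x y ∧ IsOfFinAddOrder T ∧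
        r v (x ^ 2 • P + y ^ 2 • Q) = r v T}.Finite) :
    ∃ a b : ℤ, a ≠ 0 ∧ b ≠ 0 ∧ a • P + b • Q = 0 := by
  by_contra hdep
  push Not at hdep
  obtain ⟨N, hN, hNT⟩ := exists_nsmul_eq_zero_of_finite htors fun _ hT => hT
  have hind := linearIndependent_nsmul_pair hP hQ hdep hN
  obtain ⟨v, hv, hgood⟩ := ((h1 2 Nat.prime_two 2 _ hind ![2, 1]).sdiff h).nonempty
  obtain ⟨x, y, T, hxy, hT, hrel⟩ := not_not.mp hgood
  have hNP := hv 0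
  have hNQ := hv 1
  simp only [Matrix.cons_val_zero, Matrix.cons_val_one, pow_one] at hNP hNQ
  have key : x ^ 2 • r v (N • P) + y ^ 2 • r v (N • Q) = 0 := by
    calc x ^ 2 • r v (N • P) + y ^ 2 • r v (N • Q) = N • r v (x ^ 2 • P + y ^ 2 • Q) := by
          rw [map_add, smul_add, map_zsmul, map_zsmul, map_nsmul, map_nsmul, smul_comm N (x ^ 2),
            smul_comm N (y ^ 2)]
      _ = 0 := by rw [hrel, ← map_nsmul, hNT T hT, map_zero]
  obtain ⟨hx, hy⟩ :=
    prime_dvd_of_sq_zsmul_add_sq_zsmul_eq_zero Nat.prime_two hNP.1 hNP.2 hNQ.1 hNQ.2 key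
  exact Int.prime_two.not_isUnit (hxy.isUnit_of_dvd' hx hy)

/-- If the rank-2 form `x²P + y²Q` represents a torsion point modulo almost
every `v`, then `P` and `Q` are linearly dependent over `ℤ`. -/
theorem stmt_1
    {V : Type*} [Infinite V]
    {B : Type*} [AddCommGroup B]
    (Bv : V → Type*) [∀ v, AddCommGroup (Bv v)] [∀ v, Finite (Bv v)]
    (r : ∀ v : V, B →+ Bv v)
    (htors : {T : B | IsOfFinAddOrder T}.Finite)
    (h1 : ∀ l : ℕ, l.Prime → ∀ (m : ℕ) (Pts : Fin m → B), LinearIndependent ℤ Pts →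
      ∀ k : Fin m → ℕ,
        {v : V | ∀ i : Fin m,
          l ^ (k i) ∣ addOrderOf (r v (Pts i)) ∧
          ¬ l ^ (k i + 1) ∣ addOrderOf (r v (Pts i))}.Infinite)
    (h2 : {v : V | ¬ Set.InjOn (r v) {T : B | IsOfFinAddOrder T}}.Finite)
    (P Q : B) (hP : ¬ IsOfFinAddOrder P) (hQ : ¬ IsOfFinAddOrder Q)
    (h : {v : V | ¬ ∃ (x y : ℤ) (T : B), IsCoprime x y ∧ IsOfFinAddOrder T ∧
        r v (x ^ 2 • P + y ^ 2 • Q) = r v T}.Finite) :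
    ∃ a b : ℤ, a ≠ 0 ∧ b ≠ 0 ∧ a • P + b • Q = 0 :=
  stmt_1_general Bv r htors h1 P Q hP hQ h
end

section
/- Fix an integer n ≥ 4 and a point P ∈ B of infinite order. Then: (i) for integers x_1, …, x_n one has (2x_1² + x_2² + x_3² + ⋯ + x_n²)·P = 0 if and only if (x_1, …, x_n) = (0, …, 0); and (ii) for every group homomorphism r : B → C into a finite abelian group C there exist integers x_1, …, x_n with gcd(x_1, …, x_n) = 1 such that r((2x_1² + x_2² + x_3² + ⋯ + x_n²)·P) = 0. -/
/-!
Part (i) holds because `2x₁² + x₂² + ⋯ + xₙ²` is positive definite and `P` has infinite order.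
For part (ii), let `m` be the order of `r P`; it suffices to find a primitive `x` with
`m ∣ 2x₁² + x₂² + ⋯ + xₙ²`. Taking `x = (a, b, c, 1, 0, …, 0)` reduces this to solving
`2a² + b² + c² = -1` in `ZMod m`. By the Chinese remainder theorem it suffices to solve it in
`ℤ_[p]` for every prime `p`, and there Hensel's lemma applies: to `b² + 7 = 0` from `b = 1`
when `p = 2` (with `a = 1, c = 2`), and for odd `p` to `b² + c² + 1 = 0` from a solution
modulo `p`, which exists since every residue is a sum of two squares.
-/

open Finset

def RepresentsNegOne (R : Type*) [CommRing R] : Prop :=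
  ∃ a b c : R, 2 * a ^ 2 + b ^ 2 + c ^ 2 = -1

namespace RepresentsNegOne

variable {R S : Type*} [CommRing R] [CommRing S]

theorem map (f : R →+* S) : RepresentsNegOne R → RepresentsNegOne S := by
  rintro ⟨a, b, c, h⟩
  exact ⟨f a, f b, f c, by simpa [map_ofNat] using congrArg f h⟩

theorem prod : RepresentsNegOne R → RepresentsNegOne S → RepresentsNegOne (R × S) := by
  rintro ⟨a, b, c, h⟩ ⟨a', b', c', h'⟩
  exact ⟨(a, a'), (b, b'), (c, c'), Prod.ext h h'⟩

end RepresentsNegOne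

namespace PadicInt

variable {p : ℕ} [Fact p.Prime]

theorem exists_sq_add_eq_zero {b c : ℤ_[p]} (h : ‖b ^ 2 + c‖ < ‖2 * b‖ ^ 2) :
    ∃ z : ℤ_[p], z ^ 2 + c = 0 := by
  obtain ⟨z, hz, -⟩ := hensels_lemma (F := Polynomial.X ^ 2 + Polynomial.C c) (a := b)
    (by simpa [one_add_one_eq_two] using h)
  exact ⟨z, by simpa using hz⟩

theorem norm_lt_one_iff_toZMod_eq_zero (x : ℤ_[p]) : ‖x‖ < 1 ↔ toZMod x = 0 := by
  rw [← RingHom.mem_ker, ker_toZMod, IsLocalRing.mem_maximalIdeal, mem_nonunits]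

theorem representsNegOne_two : RepresentsNegOne ℤ_[2] := by
  have hnorm : ‖(1 : ℤ_[2]) ^ 2 + 7‖ < ‖2 * (1 : ℤ_[2])‖ ^ 2 := by
    have height : (1 : ℤ_[2]) ^ 2 + 7 = ((2 : ℕ) : ℤ_[2]) ^ 3 := by norm_num
    have htwo : (2 : ℤ_[2]) * 1 = ((2 : ℕ) : ℤ_[2]) := by norm_num
    rw [height, htwo, norm_p_pow, norm_p]
    norm_num
  obtain ⟨z, hz⟩ := exists_sq_add_eq_zero hnorm
  exact ⟨1, z, 2, by linear_combination hz⟩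

theorem representsNegOne_of_ne_two (hp : p ≠ 2) : RepresentsNegOne ℤ_[p] := by
  obtain ⟨u, v, huv⟩ := ZMod.sq_add_sq p (-1)
  wlog hu : u ≠ 0 generalizing u v
  · refine this v u (by rw [← huv]; ring) fun hv => ?_
    rw [not_not.1 hu, hv] at huv
    simp at huv
  obtain ⟨b, rfl⟩ := ZMod.ringHom_surjective toZMod u
  obtain ⟨c, rfl⟩ := ZMod.ringHom_surjective toZMod v
  have hsmall : ‖b ^ 2 + (c ^ 2 + 1)‖ < 1 := by
    rw [norm_lt_one_iff_toZMod_eq_zero]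
    simp only [map_add, map_pow, map_one]
    linear_combination huv
  have hunit : ‖2 * b‖ = 1 := by
    refine le_antisymm (norm_le_one _) (not_lt.1 fun h => ?_)
    rw [norm_lt_one_iff_toZMod_eq_zero, map_mul, map_ofNat] at h
    have : (2 : ZMod p) ≠ 0 := Ring.two_ne_zero (by rwa [ZMod.ringChar_zmod_n])
    exact mul_ne_zero this hu h
  obtain ⟨z, hz⟩ := exists_sq_add_eq_zero (by rwa [hunit, one_pow])
  exact ⟨0, z, c, by linear_combination hz⟩

theorem representsNegOne (p : ℕ) [Fact p.Prime] : RepresentsNegOne ℤ_[p] := by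
  rcases eq_or_ne p 2 with rfl | hp
  · exact representsNegOne_two
  · exact representsNegOne_of_ne_two hp

end PadicInt

theorem ZMod.representsNegOne {m : ℕ} (hm : m ≠ 0) : RepresentsNegOne (ZMod m) := by
  induction m using Nat.recOnPosPrimePosCoprime with
  | prime_pow p k hp _ =>
    have : Fact p.Prime := ⟨hp⟩
    exact (PadicInt.representsNegOne p).map (PadicInt.toZModPow k)
  | zero => exact absurd rfl hm
  | one => exact ⟨0, 0, 0, Subsingleton.elim _ _⟩
  | coprime a b ha hb hab iha ihb =>
    exact ((iha (by omega)).prod (ihb (by omega))).map (ZMod.chineseRemainder hab).symm.toRingHom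

theorem two_mul_sq_add_sum_erase_sq {ι R : Type*} [Fintype ι] [DecidableEq ι] [CommSemiring R]
    (x : ι → R) (i₀ : ι) :
    2 * x i₀ ^ 2 + ∑ i ∈ univ.erase i₀, x i ^ 2 = x i₀ ^ 2 + ∑ i, x i ^ 2 := by
  rw [← add_sum_erase _ _ (mem_univ i₀)]
  ring

theorem sq_add_sum_sq_eq_zero_iff {ι R : Type*} [Fintype ι] [Ring R] [LinearOrder R]
    [IsStrictOrderedRing R] (x : ι → R) (i₀ : ι) :
    x i₀ ^ 2 + ∑ i, x i ^ 2 = 0 ↔ ∀ i, x i = 0 := by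
  rw [add_eq_zero_iff_of_nonneg (sq_nonneg _) (sum_nonneg fun i _ => sq_nonneg (x i)),
    sum_eq_zero_iff_of_nonneg fun i _ => sq_nonneg (x i)]
  simp only [sq_eq_zero_iff, mem_univ, true_implies]
  exact and_iff_right_of_imp fun h => h i₀

theorem exists_gcd_eq_one_dvd_sq_add_sum_sq {n m : ℕ} (hn : 4 ≤ n) (hm : m ≠ 0) :
    ∃ x : Fin n → ℤ, univ.gcd x = 1 ∧ (m : ℤ) ∣ x ⟨0, Nat.zero_lt_of_lt hn⟩ ^ 2 + ∑ i, x i ^ 2 := by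
  obtain ⟨a, b, c, habc⟩ := ZMod.representsNegOne hm
  obtain ⟨a, rfl⟩ := ZMod.intCast_surjective a
  obtain ⟨b, rfl⟩ := ZMod.intCast_surjective b
  obtain ⟨c, rfl⟩ := ZMod.intCast_surjective c
  set y : ℕ → ℤ := fun j => [a, b, c, 1].getD j 0
  have hsum : ∑ i : Fin n, y i ^ 2 = a ^ 2 + b ^ 2 + c ^ 2 + 1 := by
    rw [Fin.sum_univ_eq_sum_range (fun j => y j ^ 2),
      ← sum_subset (range_subset_range.2 hn) fun j _ hj => ?_]
    · simp [y, sum_range_succ]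
    · have : 4 ≤ j := by simpa using hj
      simp [y, this]
  refine ⟨fun i => y i, Int.eq_one_of_dvd_one Int.finsetGcd_nonneg ?_, ?_⟩
  · exact gcd_dvd (mem_univ (⟨3, by omega⟩ : Fin n))
  · show (m : ℤ) ∣ a ^ 2 + ∑ i : Fin n, y i ^ 2
    rw [hsum, ← ZMod.intCast_zmod_eq_zero_iff_dvd]
    push_cast
    linear_combination habc

/-- For `n ≥ 4` and `P` of infinite order, the form
`(2x₁² + x₂² + ⋯ + xₙ²)·P` vanishes only trivially over `ℤ`, yet it
represents `0` under every reduction map to a finite abelian group with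
coprime coordinates. -/
theorem stmt_5
    {B : Type*} [AddCommGroup B]
    (n : ℕ) (hn : 4 ≤ n)
    (P : B) (hP : ¬ IsOfFinAddOrder P) :
    (∀ x : Fin n → ℤ,
      (2 * (x ⟨0, by omega⟩) ^ 2 +
        ∑ i ∈ Finset.univ.erase (⟨0, by omega⟩ : Fin n), (x i) ^ 2) • P = 0
      ↔ ∀ i : Fin n, x i = 0) ∧
    (∀ (C : Type) (_ : AddCommGroup C) (_ : Finite C) (r : B →+ C),
      ∃ x : Fin n → ℤ, Finset.univ.gcd x = 1 ∧
        r ((2 * (x ⟨0, by omega⟩) ^ 2 +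
          ∑ i ∈ Finset.univ.erase (⟨0, by omega⟩ : Fin n), (x i) ^ 2) • P) = 0) := by
  refine ⟨fun x => ?_, fun C _ _ r => ?_⟩
  · rw [two_mul_sq_add_sum_erase_sq,
      (injective_zsmul_iff_not_isOfFinAddOrder.2 hP).eq_iff' (zero_zsmul P),
      sq_add_sum_sq_eq_zero_iff]
  · obtain ⟨x, hgcd, hdvd⟩ := exists_gcd_eq_one_dvd_sq_add_sum_sq hn
      (isOfFinAddOrder_of_finite (r P)).addOrderOf_pos.ne'
    refine ⟨x, hgcd, ?_⟩
    rwa [two_mul_sq_add_sum_erase_sq, map_zsmul, ← addOrderOf_dvd_iff_zsmul_eq_zero]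
end

section
/- Let f(x, y) = ax² + bxy + cy² be a quadratic form with integer coefficients a, b, c. If for all but finitely many prime numbers p there exist integers x, y, not both divisible by p, with p ∣ f(x, y), then f represents 0 nontrivially over the integers: there exist integers x, y, not both zero, with f(x, y) = 0. -/
open scoped NumberTheorySymbols

/-- For a squarefree integer `m ≠ 1`, there is an odd natural `n` with `J(m|n) = -1`. -/
lemma aux_jac_neg (m : ℤ) (hm : Squarefree m) (hm1 : m ≠ 1) :
    ∃ n : ℕ, Odd n ∧ J(m | n) = -1 := by
  by_cases hq : ∃ q : ℕ, q.Prime ∧ q ≠ 2 ∧ (q : ℤ) ∣ m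
  · obtain ⟨q, hqp, hq2, ⟨t, rfl⟩⟩ := hq
    haveI : Fact q.Prime := ⟨hqp⟩
    have hq1 : 1 < q := hqp.one_lt
    have ht0 : t ≠ 0 := by rintro rfl; simp at hm
    have hqt : ¬ (q : ℤ) ∣ t := by
      rintro ⟨s, rfl⟩
      have hu : IsUnit (q : ℤ) := hm (q : ℤ) ⟨s, by ring⟩
      rcases Int.isUnit_iff.mp hu with h | h <;> omega
    -- coprimality of the two moduli
    have hco : (8 * t.natAbs).Coprime q := by
      refine Nat.Coprime.symm (Nat.Coprime.mul_right ?_ ?_)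
      · rw [Nat.Prime.coprime_iff_not_dvd hqp]
        intro hd
        have : q ∣ 2 := hqp.dvd_of_dvd_pow (show q ∣ 2 ^ 3 by norm_num; exact hd)
        exact hq2 ((Nat.prime_dvd_prime_iff_eq hqp Nat.prime_two).mp this)
      · rw [Nat.Prime.coprime_iff_not_dvd hqp]
        intro hd
        exact hqt (Int.dvd_natAbs.mp (Int.natCast_dvd_natCast.mpr hd))
    -- a quadratic nonresidue mod q
    have hchar : ringChar (ZMod q) ≠ 2 := by
      rw [ZMod.ringChar_zmod_n]; exact hq2
    obtain ⟨u, hu⟩ := quadraticChar_exists_neg_one hchar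
    obtain ⟨n, hn1, hn2⟩ := Nat.chineseRemainder hco 1 u.val
    have hodd : Odd n := by
      have h2 : n % 2 = 1 % 2 := (Nat.ModEq.of_dvd ⟨4 * t.natAbs, by ring⟩ hn1)
      exact Nat.odd_iff.mpr (by omega)
    refine ⟨n, hodd, ?_⟩
    rw [jacobiSym.mul_left]
    -- J(t | n) = 1
    have hJt : J(t | n) = 1 := by
      rw [jacobiSym.mod_right t hodd]
      have h4 : n % (4 * t.natAbs) = 1 := by
        have hmod : n % (4 * t.natAbs) = 1 % (4 * t.natAbs) :=
          Nat.ModEq.of_dvd ⟨2, by ring⟩ hn1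
        have : (1 : ℕ) % (4 * t.natAbs) = 1 := by
          have := Int.natAbs_pos.mpr ht0
          exact Nat.one_mod_eq_one.mpr (by omega)
        omega
      rw [h4, jacobiSym.one_right]
    -- J(q | n) = -1
    have hJq : J((q : ℤ) | n) = -1 := by
      have hn4 : n % 4 = 1 := by
        have hmod : n % 4 = 1 % 4 := Nat.ModEq.of_dvd ⟨2 * t.natAbs, by ring⟩ hn1
        omega
      have := jacobiSym.quadratic_reciprocity_one_mod_four' (Nat.Prime.odd_of_ne_two hqp hq2) hn4
      rw [this]
      have hmodq : (n : ℤ) % q = (u.val : ℤ) % q := by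
        have := hn2
        unfold Nat.ModEq at this
        omega
      rw [jacobiSym.mod_left' hmodq, ZMod.nonsquare_iff_jacobiSym_eq_neg_one]
      simpa [ZMod.natCast_val, ZMod.cast_id] using quadraticChar_neg_one_iff_not_isSquare.mp hu
    rw [hJt, hJq, mul_one]
  · -- m ∈ {-1, 2, -2}
    push_neg at hq
    have hm0 : m ≠ 0 := hm.ne_zero
    have hsf : Squarefree m.natAbs := Int.squarefree_natAbs.mpr hm
    have hle : m.natAbs = 1 ∨ m.natAbs = 2 := by
      by_cases h2 : 2 ∣ m.natAbs
      · obtain ⟨k, hk⟩ := h2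
        right
        have hk1 : k = 1 := by
          by_contra hk1
          have hk0 : k ≠ 0 := by
            rintro rfl
            exact hm0 (Int.natAbs_eq_zero.mp (by omega))
          obtain ⟨p, hp, hpk⟩ := Nat.exists_prime_and_dvd hk1
          have hpm : (p : ℤ) ∣ m := by
            rw [← Int.natAbs_dvd_natAbs]
            simpa using dvd_trans hpk ⟨2, by omega⟩
          have hp2 : p = 2 := by
            by_contra hp2
            exact hq p hp hp2 hpm
          subst hp2
          obtain ⟨j, hj⟩ := hpk
          exact (Nat.squarefree_iff_prime_squarefree.mp hsf) 2 Nat.prime_two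
            ⟨j, by omega⟩
        omega
      · left
        by_contra h1
        obtain ⟨p, hp, hpk⟩ := Nat.exists_prime_and_dvd h1
        have hp2 : p = 2 := by
          by_contra hp2
          exact hq p hp hp2 (by rw [← Int.natAbs_dvd_natAbs]; simpa using hpk)
        exact h2 (hp2 ▸ hpk)
    have : m = -1 ∨ m = 2 ∨ m = -2 := by
      rcases Int.natAbs_eq m with h | h <;> rcases hle with h1 | h1 <;> omega
    rcases this with rfl | rfl | rfl
    · exact ⟨3, by decide, by norm_num⟩
    · exact ⟨5, by decide, by norm_num⟩
    · exact ⟨5, by decide, by norm_num⟩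


/-- If `D` is not a square, then for any `M ≠ 0` there is a prime `p ∤ M`
with `D` a nonsquare mod `p`. -/
lemma aux_prime (D : ℤ) (hD : ¬ IsSquare D) (M : ℕ) (hM : M ≠ 0) :
    ∃ p : ℕ, p.Prime ∧ ¬ (p ∣ M) ∧ ¬ IsSquare (D : ZMod p) := by
  have hD0 : D ≠ 0 := by rintro rfl; exact hD ⟨0, by ring⟩
  -- squarefree decomposition
  obtain ⟨a, bnn, hab, hsf⟩ := Nat.sq_mul_squarefree D.natAbs
  have ha0 : a ≠ 0 := hsf.ne_zero
  have hb0 : bnn ≠ 0 := by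
    rintro rfl
    simp at hab
    exact hD0 (Int.natAbs_eq_zero.mp hab.symm)
  obtain ⟨m, hmD, hmabs⟩ : ∃ m : ℤ, D = (bnn : ℤ) ^ 2 * m ∧ m.natAbs = a := by
    rcases Int.natAbs_eq D with h | h
    · exact ⟨(a : ℤ), by rw [h, ← hab]; push_cast; ring, by simp⟩
    · exact ⟨-(a : ℤ), by rw [h, ← hab]; push_cast; ring, by simp⟩
  have hmsf : Squarefree m := Int.squarefree_natAbs.mp (by rw [hmabs]; exact hsf)
  have hm1 : m ≠ 1 := by rintro rfl; exact hD ⟨(bnn : ℤ), by rw [hmD]; ring⟩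
  have hm0 : m ≠ 0 := hmsf.ne_zero
  obtain ⟨n₀, hodd, hJ⟩ := aux_jac_neg m hmsf hm1
  set L := 4 * m.natAbs with hL
  haveI : NeZero L := ⟨by positivity⟩
  -- n₀ is a unit mod L
  have hcop : n₀.Coprime L := by
    have h1 : n₀.Coprime 4 := by
      have := Nat.odd_iff.mp hodd
      have h2 : n₀.Coprime 2 := by
        rw [Nat.coprime_comm, Nat.Prime.coprime_iff_not_dvd Nat.prime_two]
        omega
      simpa [show (4:ℕ) = 2 ^ 2 by norm_num] using h2.pow_right 2
    have h2 : n₀.Coprime m.natAbs := by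
      by_contra hcon
      have : J(m | n₀) = 0 := by
        rw [jacobiSym.eq_zero_iff]
        refine ⟨?_, ?_⟩
        · rintro rfl; simp [Nat.odd_iff] at hodd
        · intro hg
          exact hcon (Nat.coprime_comm.mp hg)
      omega
    exact Nat.Coprime.mul_right h1 h2
  have hunit : IsUnit ((n₀ : ℕ) : ZMod L) := (ZMod.isUnit_iff_coprime n₀ L).mpr hcop
  obtain ⟨p, hpgt, hp, hpmod⟩ := Nat.forall_exists_prime_gt_and_eq_mod hunit (M * bnn)
  haveI : Fact p.Prime := ⟨hp⟩
  have hMb : 0 < M * bnn := Nat.pos_of_ne_zero (by positivity)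
  have hpM : ¬ p ∣ M := fun hd =>
    absurd (Nat.le_of_dvd (Nat.pos_of_ne_zero hM) hd) (by
      have : M ≤ M * bnn := Nat.le_mul_of_pos_right M (Nat.pos_of_ne_zero hb0)
      omega)
  have hpb : ¬ p ∣ bnn := fun hd =>
    absurd (Nat.le_of_dvd (Nat.pos_of_ne_zero hb0) hd) (by
      have : bnn ≤ M * bnn := Nat.le_mul_of_pos_left bnn (Nat.pos_of_ne_zero hM)
      omega)
  have hmodeq : p ≡ n₀ [MOD L] := (ZMod.natCast_eq_natCast_iff _ _ _).mp hpmod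
  have hpodd : Odd p := by
    have h2 : p % 2 = n₀ % 2 := Nat.ModEq.of_dvd ⟨2 * m.natAbs, by rw [hL]; ring⟩ hmodeq
    have := Nat.odd_iff.mp hodd
    exact Nat.odd_iff.mpr (by omega)
  -- transfer the Jacobi symbol value
  have hJp : J(m | p) = -1 := by
    rw [jacobiSym.mod_right m hpodd, show (4 * m.natAbs) = L from rfl, hmodeq,
      ← jacobiSym.mod_right m hodd, hJ]
  have hnsq : ¬ IsSquare ((m : ZMod p)) := ZMod.nonsquare_of_jacobiSym_eq_neg_one hJp
  refine ⟨p, hp, hpM, fun hsq => hnsq ?_⟩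
  obtain ⟨s, hs⟩ := hsq
  have hbp : ((bnn : ℤ) : ZMod p) ≠ 0 := by
    rw [Int.cast_natCast]
    simpa [ZMod.natCast_eq_zero_iff] using hpb
  rw [Int.cast_natCast] at hbp
  have hDm : ((D : ℤ) : ZMod p) = (bnn : ZMod p) ^ 2 * (m : ZMod p) := by
    rw [hmD]; push_cast; ring
  refine ⟨s * (bnn : ZMod p)⁻¹, ?_⟩
  field_simp
  first
  | linear_combination hDm - hs
  | linear_combination hs - hDm

/-- A binary integral quadratic form representing `0` modulo all but finitely
many primes represents `0` nontrivially over `ℤ`. -/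
theorem stmt_7 (a b c : ℤ)
    (h : {p : ℕ | p.Prime ∧ ¬ ∃ x y : ℤ, ¬ ((p : ℤ) ∣ x ∧ (p : ℤ) ∣ y) ∧
        (p : ℤ) ∣ (a * x ^ 2 + b * x * y + c * y ^ 2)}.Finite) :
    ∃ x y : ℤ, ¬ (x = 0 ∧ y = 0) ∧ a * x ^ 2 + b * x * y + c * y ^ 2 = 0 := by
  by_cases ha : a = 0
  · exact ⟨1, 0, by norm_num, by simp [ha]⟩
  -- the discriminant is a square
  have hD : IsSquare (b ^ 2 - 4 * a * c) := by
    by_contra hD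
    -- collect the bad primes into M
    set M : ℕ := 2 * a.natAbs * ∏ p ∈ h.toFinset, p with hM
    have hM0 : M ≠ 0 := by
      have h1 : a.natAbs ≠ 0 := Int.natAbs_ne_zero.mpr ha
      have h2 : ∏ p ∈ h.toFinset, p ≠ 0 := by
        rw [Finset.prod_ne_zero_iff]
        intro p hp
        exact (h.mem_toFinset.mp hp).1.ne_zero
      positivity
    obtain ⟨p, hp, hpM, hpD⟩ := aux_prime _ hD M hM0
    haveI : Fact p.Prime := ⟨hp⟩
    -- p is not a bad prime
    have hp2 : p ≠ 2 := by rintro rfl; exact hpM ⟨a.natAbs * ∏ p ∈ h.toFinset, p, by ring⟩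
    have hpa : ¬ (p : ℤ) ∣ a := by
      intro hd
      have h1 : p ∣ a.natAbs := Int.natCast_dvd_natCast.mp (Int.dvd_natAbs.mpr hd)
      exact hpM (Dvd.dvd.mul_right (Dvd.dvd.mul_left h1 2) _)
    have hpS : p ∉ {p : ℕ | p.Prime ∧ ¬ ∃ x y : ℤ, ¬ ((p : ℤ) ∣ x ∧ (p : ℤ) ∣ y) ∧
        (p : ℤ) ∣ (a * x ^ 2 + b * x * y + c * y ^ 2)} := by
      intro hmem
      exact hpM (Dvd.dvd.mul_left (Finset.dvd_prod_of_mem _ (h.mem_toFinset.mpr hmem)) _)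
    -- hence f represents 0 mod p
    have hrep : ∃ x y : ℤ, ¬ ((p : ℤ) ∣ x ∧ (p : ℤ) ∣ y) ∧
        (p : ℤ) ∣ (a * x ^ 2 + b * x * y + c * y ^ 2) := by
      by_contra hcon
      exact hpS ⟨hp, hcon⟩
    obtain ⟨x, y, hxy, hdvd⟩ := hrep
    -- work in ZMod p
    apply hpD
    have heq : (a : ZMod p) * (x : ZMod p) ^ 2 + b * x * y + c * y ^ 2 = 0 := by
      have := (ZMod.intCast_zmod_eq_zero_iff_dvd _ p).mpr hdvd
      push_cast at this
      linear_combination this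
    have ha' : (a : ZMod p) ≠ 0 := by
      simpa [ZMod.intCast_zmod_eq_zero_iff_dvd] using hpa
    have h2' : (2 : ZMod p) ≠ 0 := by
      have hnd : ¬ p ∣ 2 := fun hd =>
        hp2 ((Nat.prime_dvd_prime_iff_eq hp Nat.prime_two).mp hd)
      intro hzero
      exact hnd ((ZMod.natCast_eq_zero_iff 2 p).mp (by exact_mod_cast hzero))
    by_cases hy : (y : ZMod p) = 0
    · -- then x ≡ 0 too, contradiction
      exfalso
      have hx : (x : ZMod p) = 0 := by
        have hax : (a : ZMod p) * (x : ZMod p) ^ 2 = 0 := by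
          linear_combination heq - ((b : ZMod p) * x + c * y) * hy
        have hx2 : (x : ZMod p) ^ 2 = 0 := by
          rcases mul_eq_zero.mp hax with h4 | h4
          · exact absurd h4 ha'
          · exact h4
        exact pow_eq_zero_iff (n := 2) (by norm_num) |>.mp hx2
      exact hxy ⟨(ZMod.intCast_zmod_eq_zero_iff_dvd _ p).mp hx,
        (ZMod.intCast_zmod_eq_zero_iff_dvd _ p).mp hy⟩
    · -- D is a square mod p
      refine ⟨((2 : ZMod p) * a * x + b * y) * (y : ZMod p)⁻¹, ?_⟩
      have key : ((2 : ZMod p) * a * x + b * y) ^ 2 =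
          ((b : ZMod p) ^ 2 - 4 * a * c) * y ^ 2 := by
        linear_combination (4 * (a : ZMod p)) * heq
      have : ((b ^ 2 - 4 * a * c : ℤ) : ZMod p) = (b : ZMod p) ^ 2 - 4 * a * c := by
        push_cast; ring
      rw [this]
      have hstep : ((2 : ZMod p) * a * x + b * y) * (y : ZMod p)⁻¹ *
          (((2 : ZMod p) * a * x + b * y) * (y : ZMod p)⁻¹) =
          (((2 : ZMod p) * a * x + b * y) ^ 2) * ((y : ZMod p)⁻¹) ^ 2 := by ring
      rw [hstep, key]
      symm
      have h1 : (y : ZMod p) ^ 2 * ((y : ZMod p)⁻¹) ^ 2 = 1 := by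
        rw [← mul_pow, mul_inv_cancel₀ hy, one_pow]
      calc ((b : ZMod p) ^ 2 - 4 * a * c) * (y : ZMod p) ^ 2 * ((y : ZMod p)⁻¹) ^ 2
          = ((b : ZMod p) ^ 2 - 4 * a * c) * ((y : ZMod p) ^ 2 * ((y : ZMod p)⁻¹) ^ 2) := by
            ring
        _ = (b : ZMod p) ^ 2 - 4 * a * c := by rw [h1, mul_one]
  -- now construct the zero
  obtain ⟨d, hd⟩ := hD
  refine ⟨d - b, 2 * a, fun hcon => by
    have := hcon.2; omega, ?_⟩
  linear_combination (-a) * hd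
end

section
/- Let f(x, y, z) be a quadratic form in three variables with rational coefficients. If f has a nontrivial zero in the field ℚ_p of p-adic numbers for every prime number p, then f has a nontrivial zero in ℚ. -/
/-!
Completing the square twice turns the form into `x² - q y² - r z²`, and rescaling by squares makes
`q` and `r` squarefree integers. For those we run Legendre's descent. Say `|q| ≤ |r|` and `|r| ≥ 2`.
Isotropy over `ℚ_p` for `p ∣ r` makes `q` a square mod `p`, so by the CRT it is a square mod `r`.
That gives `t² - q = r c` with `|t| ≤ |r| / 2`, hence `|c| < |r|`. Since `r c` is a norm from
`K(√q)`, the pairs `(q, r)` and `(q, c)` are isotropic over the same fields `K`, and the descent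
continues with `(q, c)`. It stops at `|q| = |r| = 1`. There only `(-1, -1)` is anisotropic over `ℚ`,
and it is anisotropic over `ℚ_2` as well, because 2-adic squares are `0` or `1` mod `4`.
-/

/-- `x² = a y² + b z²` has a nontrivial solution; for `a, b ≠ 0` this says that the Hilbert symbol
`(a, b)_K` is `1`. -/
def HilbertIsotropic (K : Type*) [Field K] (a b : K) : Prop :=
  ∃ x y z : K, ¬ (x = 0 ∧ y = 0 ∧ z = 0) ∧ x ^ 2 - a * y ^ 2 - b * z ^ 2 = 0

section HilbertIsotropic

variable {K : Type*} [Field K] {a b c s t u : K}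

theorem HilbertIsotropic.symm (h : HilbertIsotropic K a b) : HilbertIsotropic K b a := by
  obtain ⟨x, y, z, hne, h⟩ := h
  exact ⟨x, z, y, by tauto, by linear_combination h⟩

theorem hilbertIsotropic_comm : HilbertIsotropic K a b ↔ HilbertIsotropic K b a :=
  ⟨.symm, .symm⟩

theorem HilbertIsotropic.of_sq (h : t ^ 2 = a) : HilbertIsotropic K a b :=
  ⟨t, 1, 0, by simp, by linear_combination h⟩

theorem hilbertIsotropic_zero_right : HilbertIsotropic K a 0 :=
  ⟨0, 0, 1, by simp, by ring⟩

theorem hilbertIsotropic_zero_left : HilbertIsotropic K 0 b :=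
  hilbertIsotropic_zero_right.symm

theorem HilbertIsotropic.of_mul_sq (hs : s ≠ 0) (h : HilbertIsotropic K a (b * s ^ 2)) :
    HilbertIsotropic K a b := by
  obtain ⟨x, y, z, hne, h⟩ := h
  exact ⟨x, y, s * z, by simpa [hs] using hne, by linear_combination h⟩

theorem hilbertIsotropic_mul_sq_iff (hs : s ≠ 0) :
    HilbertIsotropic K a (b * s ^ 2) ↔ HilbertIsotropic K a b := by
  refine ⟨.of_mul_sq hs, fun h => .of_mul_sq (inv_ne_zero hs) ?_⟩
  rwa [mul_assoc, ← mul_pow, mul_inv_cancel₀ hs, one_pow, mul_one]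

theorem hilbertIsotropic_mul_sq_mul_sq_iff (hs : s ≠ 0) (hu : u ≠ 0) :
    HilbertIsotropic K (a * s ^ 2) (b * u ^ 2) ↔ HilbertIsotropic K a b := by
  rw [hilbertIsotropic_mul_sq_iff hu, hilbertIsotropic_comm, hilbertIsotropic_mul_sq_iff hs,
    hilbertIsotropic_comm]

/-- From `x² - a y² = b z²` and `t² - a = b c`: `(t x - a y)² - a (x - t y)² = c (b z)²`. -/
theorem HilbertIsotropic.of_sq_sub_eq_mul (hb : b ≠ 0) (hc : c ≠ 0) (htbc : t ^ 2 - a = b * c)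
    (h : HilbertIsotropic K a b) : HilbertIsotropic K a c := by
  obtain ⟨x, y, z, hne, h⟩ := h
  refine ⟨t * x - a * y, x - t * y, b * z, fun ⟨h₁, h₂, h₃⟩ => hne ?_,
    by linear_combination (t ^ 2 - a) * h + b * z ^ 2 * htbc⟩
  have hz : z = 0 := (mul_eq_zero.1 h₃).resolve_left hb
  have hy : y = 0 := by
    have : b * c * y = 0 := by linear_combination h₁ - t * h₂ - y * htbc
    simpa [hb, hc] using this
  exact ⟨by linear_combination h₂ + t * hy, hy, hz⟩

theorem hilbertIsotropic_iff_of_sq_sub_eq_mul (hb : b ≠ 0) (hc : c ≠ 0)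
    (htbc : t ^ 2 - a = b * c) : HilbertIsotropic K a b ↔ HilbertIsotropic K a c :=
  ⟨.of_sq_sub_eq_mul hb hc htbc, .of_sq_sub_eq_mul hc hb (htbc.trans (mul_comm b c))⟩

end HilbertIsotropic

def TernaryFormIsotropic (K : Type*) [Field K] (a b c d e f : K) : Prop :=
  ∃ x y z : K, ¬ (x = 0 ∧ y = 0 ∧ z = 0) ∧
    a * x ^ 2 + b * y ^ 2 + c * z ^ 2 + d * x * y + e * x * z + f * y * z = 0

/-- Completing the square twice: writing `D = 4ab - d²`, `G = 2af - de` and `Q` for the form,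
`4aD·Q(x, y, z) = (Dy + Gz)² + D(2ax + dy + ez)² + 4a(4abc + def - af² - be² - cd²)z²`. -/
theorem ternaryFormIsotropic_iff {K : Type*} [Field K] [NeZero (2 : K)] (a b c d e f : K) :
    TernaryFormIsotropic K a b c d e f ↔ HilbertIsotropic K (d ^ 2 - 4 * a * b)
      (-4 * a * (4 * a * b * c + d * e * f - a * f ^ 2 - b * e ^ 2 - c * d ^ 2)) := by
  by_cases ha : a = 0
  · subst ha
    exact iff_of_true ⟨1, 0, 0, by simp, by ring⟩ (by simpa using hilbertIsotropic_zero_right)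
  by_cases hD : d ^ 2 - 4 * a * b = 0
  · exact iff_of_true ⟨-d, 2 * a, 0, by simp [ha, two_ne_zero], by linear_combination -a * hD⟩
      (by rw [hD]; exact hilbertIsotropic_zero_left)
  set D := 4 * a * b - d ^ 2
  set G := 2 * a * f - d * e
  have hD' : D ≠ 0 := fun h => hD (by linear_combination -h)
  have h2a : 2 * a ≠ 0 := mul_ne_zero two_ne_zero ha
  constructor
  · rintro ⟨x, y, z, hne, hQ⟩
    refine ⟨D * y + G * z, 2 * a * x + d * y + e * z, z, fun ⟨hu, hv, hz⟩ => hne ?_,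
      by linear_combination 4 * a * D * hQ⟩
    have hy : y = 0 := by simpa [hz, hD'] using hu
    exact ⟨by simpa [hy, hz, h2a] using hv, hy, hz⟩
  · rintro ⟨u, v, w, hne, hH⟩
    set y := (u - G * w) / D with hy
    set x := (v - d * y - e * w) / (2 * a) with hx
    have hu : u = D * y + G * w := by rw [hy]; field_simp; ring
    have hv : v = 2 * a * x + d * y + e * w := by rw [hx]; field_simp; ring
    refine ⟨x, y, w, fun ⟨hx0, hy0, hw0⟩ => hne ⟨?_, ?_, hw0⟩, ?_⟩
    · simp [hu, hy0, hw0]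
    · simp [hv, hx0, hy0, hw0]
    · have : 2 * (2 * a) * D *
          (a * x ^ 2 + b * y ^ 2 + c * w ^ 2 + d * x * y + e * x * w + f * y * w) = 0 := by
        rw [hu, hv] at hH; linear_combination hH
      exact (mul_eq_zero.1 this).resolve_left (mul_ne_zero (mul_ne_zero two_ne_zero h2a) hD')

section Padic

variable {p : ℕ} [Fact p.Prime]

theorem Padic.exists_eq_mul_primitive (x y z : ℚ_[p]) (h : ¬ (x = 0 ∧ y = 0 ∧ z = 0)) :
    ∃ (w : ℚ_[p]) (X Y Z : ℤ_[p]), w ≠ 0 ∧ (IsUnit X ∨ IsUnit Y ∨ IsUnit Z) ∧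
      x = w * X ∧ y = w * Y ∧ z = w * Z := by
  classical
  obtain ⟨w, hw, hmax⟩ := Finset.exists_max_image {x, y, z} (‖·‖) (by simp)
  simp only [Finset.mem_insert, Finset.mem_singleton, forall_eq_or_imp, forall_eq] at hw hmax
  obtain ⟨hx, hy, hz⟩ := hmax
  have hw0 : w ≠ 0 := by
    rintro rfl
    simp only [norm_zero, norm_le_zero_iff] at hx hy hz
    exact h ⟨hx, hy, hz⟩
  have hint : ∀ v : ℚ_[p], ‖v‖ ≤ ‖w‖ → ‖v / w‖ ≤ 1 := fun v hv => by
    rw [norm_div]; exact div_le_one_of_le₀ hv (norm_nonneg _)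
  let scale (v : ℚ_[p]) (hv : ‖v‖ ≤ ‖w‖) : ℤ_[p] := ⟨v / w, hint v hv⟩
  have hunit : ∀ v (hv : ‖v‖ ≤ ‖w‖), v = w → IsUnit (scale v hv) := by
    rintro v hv rfl
    exact PadicInt.isUnit_iff.2 (by simp [scale, hw0])
  refine ⟨w, scale x hx, scale y hy, scale z hz, hw0, ?_,
    (mul_div_cancel₀ x hw0).symm, (mul_div_cancel₀ y hw0).symm, (mul_div_cancel₀ z hw0).symm⟩
  rcases hw with hw | hw | hw
  · exact .inl (hunit x hx hw.symm)
  · exact .inr (.inl (hunit y hy hw.symm))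
  · exact .inr (.inr (hunit z hz hw.symm))

theorem HilbertIsotropic.exists_primitive {a b : ℤ} (h : HilbertIsotropic ℚ_[p] a b) :
    ∃ X Y Z : ℤ_[p], (IsUnit X ∨ IsUnit Y ∨ IsUnit Z) ∧ X ^ 2 - a * Y ^ 2 - b * Z ^ 2 = 0 := by
  obtain ⟨x, y, z, hne, h⟩ := h
  obtain ⟨w, X, Y, Z, hw, hunit, rfl, rfl, rfl⟩ := Padic.exists_eq_mul_primitive x y z hne
  refine ⟨X, Y, Z, hunit, ?_⟩
  have : w ^ 2 * ((X : ℚ_[p]) ^ 2 - a * Y ^ 2 - b * Z ^ 2) = 0 := by linear_combination h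
  refine PadicInt.coe_eq_zero.1 ?_
  push_cast
  exact (mul_eq_zero.1 this).resolve_left (pow_ne_zero 2 hw)

theorem PadicInt.toZMod_eq_zero_iff_dvd (X : ℤ_[p]) : toZMod X = 0 ↔ (p : ℤ_[p]) ∣ X := by
  rw [← RingHom.mem_ker, ker_toZMod, maximalIdeal_eq_span_p, Ideal.mem_span_singleton]

/-- A primitive zero reduces to `X² ≡ a Y² mod p`. Here `Y ≢ 0`, since `Y ≡ 0` forces `X ≡ 0`,
then `p ∣ (b / p) Z²`, so `Z ≡ 0` as well. -/
theorem HilbertIsotropic.isSquare_zmod {a b : ℤ} (hb : Squarefree b) (hpb : (p : ℤ) ∣ b)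
    (h : HilbertIsotropic ℚ_[p] a b) : IsSquare (a : ZMod p) := by
  obtain ⟨X, Y, Z, hunit, heq⟩ := h.exists_primitive
  have hb0 : (b : ZMod p) = 0 := (ZMod.intCast_zmod_eq_zero_iff_dvd b p).2 hpb
  have hmod : PadicInt.toZMod X ^ 2 = a * PadicInt.toZMod Y ^ 2 := by
    have := congrArg PadicInt.toZMod heq
    simp only [map_sub, map_mul, map_pow, map_intCast, hb0, map_zero] at this
    linear_combination this
  by_cases hY : PadicInt.toZMod Y = 0
  · exfalso
    have hX : PadicInt.toZMod X = 0 := by simpa [hY] using hmod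
    obtain ⟨X', rfl⟩ := (PadicInt.toZMod_eq_zero_iff_dvd X).1 hX
    obtain ⟨Y', rfl⟩ := (PadicInt.toZMod_eq_zero_iff_dvd Y).1 hY
    obtain ⟨b', rfl⟩ := hpb
    have hp0 : (p : ℤ_[p]) ≠ 0 := Nat.cast_ne_zero.2 (Fact.out : p.Prime).ne_zero
    have hcancel : (p : ℤ_[p]) * (X' ^ 2 - a * Y' ^ 2) = b' * Z ^ 2 := by
      apply mul_left_cancel₀ hp0
      push_cast at heq
      linear_combination heq
    have hb' : (b' : ZMod p) ≠ 0 := fun h0 => (Nat.prime_iff_prime_int.1 Fact.out).not_isUnit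
      (hb p (mul_dvd_mul_left _ ((ZMod.intCast_zmod_eq_zero_iff_dvd b' p).1 h0)))
    have hZ : PadicInt.toZMod Z = 0 := by
      have := congrArg PadicInt.toZMod hcancel
      simp only [map_mul, map_sub, map_pow, map_intCast, map_natCast, ZMod.natCast_self,
        zero_mul] at this
      simpa [hb'] using this.symm
    have hnonunit : ∀ W : ℤ_[p], PadicInt.toZMod W = 0 → ¬ IsUnit W :=
      fun W hW hu => (hu.map PadicInt.toZMod).ne_zero hW
    rcases hunit with hu | hu | hu
    · exact hnonunit _ hX hu
    · exact hnonunit _ hY hu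
    · exact hnonunit _ hZ hu
  · exact ⟨PadicInt.toZMod X / PadicInt.toZMod Y, by field_simp; linear_combination -hmod⟩

open Classical in
theorem PadicInt.toZModPow_two_sq (W : ℤ_[2]) :
    toZModPow 2 W ^ 2 = if IsUnit W then 1 else 0 := by
  split_ifs with hW
  · obtain ⟨v, hv⟩ := isUnit_iff_exists_inv.1 (hW.map (toZModPow 2))
    revert hv
    generalize toZModPow 2 W = u
    revert u v
    decide
  · obtain ⟨V, rfl⟩ := (norm_lt_one_iff_dvd W).1 (not_isUnit_iff.1 hW)
    rw [map_mul, map_natCast]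
    generalize toZModPow 2 V = v
    revert v
    decide

theorem not_hilbertIsotropic_padic_two_neg_one : ¬ HilbertIsotropic ℚ_[2] (-1) (-1) := by
  intro h
  replace h : HilbertIsotropic ℚ_[2] ((-1 : ℤ) : ℚ_[2]) ((-1 : ℤ) : ℚ_[2]) := by simpa using h
  obtain ⟨X, Y, Z, hunit, heq⟩ := h.exists_primitive
  have hsum := congrArg (PadicInt.toZModPow 2) heq
  simp only [map_sub, map_mul, map_pow, map_intCast, map_zero, PadicInt.toZModPow_two_sq] at hsum
  split_ifs at hsum <;> simp_all <;> revert hsum <;> decide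

end Padic

theorem ZMod.isSquare_intCast_mul {a : ℤ} {m n : ℕ} (hmn : m.Coprime n)
    (hm : IsSquare (a : ZMod m)) (hn : IsSquare (a : ZMod n)) : IsSquare (a : ZMod (m * n)) := by
  obtain ⟨r, hr⟩ := hm
  obtain ⟨s, hs⟩ := hn
  have : IsSquare (ZMod.chineseRemainder hmn a) := ⟨(r, s), by ext <;> simp [hr, hs]⟩
  simpa using this.map (ZMod.chineseRemainder hmn).symm

theorem ZMod.isSquare_intCast_of_squarefree {a : ℤ} {n : ℕ} (hn : Squarefree n)
    (h : ∀ p : ℕ, p.Prime → p ∣ n → IsSquare (a : ZMod p)) : IsSquare (a : ZMod n) := by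
  induction n using induction_on_primes with
  | zero => exact absurd hn not_squarefree_zero
  | one => exact ⟨0, Subsingleton.elim _ _⟩
  | prime_mul p m hp ih =>
    exact isSquare_intCast_mul (Nat.coprime_of_squarefree_mul hn) (h p hp (dvd_mul_right p m))
      (ih hn.of_mul_right fun q hq hqm => h q hq (dvd_mul_of_dvd_right hqm p))

theorem Int.exists_sq_sub_eq_mul_natAbs_lt {a b : ℤ} (hab : a.natAbs ≤ b.natAbs)
    (hb : 2 ≤ b.natAbs) (h : IsSquare (a : ZMod b.natAbs)) :
    ∃ t c : ℤ, t ^ 2 - a = b * c ∧ c.natAbs < b.natAbs := by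
  obtain ⟨r, hr⟩ := h
  have : NeZero b.natAbs := ⟨by omega⟩
  have ht : 2 * r.valMinAbs.natAbs ≤ b.natAbs := by
    have := ZMod.natAbs_valMinAbs_le r
    omega
  obtain ⟨c, hc⟩ : b ∣ r.valMinAbs ^ 2 - a := by
    rw [← Int.natAbs_dvd, ← ZMod.intCast_zmod_eq_zero_iff_dvd]
    push_cast
    rw [hr]
    ring
  refine ⟨r.valMinAbs, c, hc, ?_⟩
  have hbc : b.natAbs * c.natAbs ≤ r.valMinAbs.natAbs ^ 2 + a.natAbs := by
    rw [← Int.natAbs_mul, ← hc, ← Int.natAbs_pow]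
    exact Int.natAbs_sub_le _ _
  by_contra! hcb
  nlinarith [Nat.mul_le_mul_left b.natAbs hcb, Nat.mul_le_mul ht ht]

theorem Int.exists_squarefree_mul_sq (n : ℤ) : ∃ m k : ℤ, Squarefree m ∧ n = m * k ^ 2 := by
  obtain ⟨m, k, hmk, hm⟩ := Nat.sq_mul_squarefree n.natAbs
  rcases Int.natAbs_eq n with h | h
  · exact ⟨m, k, Int.squarefree_natCast.2 hm, by rw [h, ← hmk]; push_cast; ring⟩
  · refine ⟨-m, k, Int.squarefree_natAbs.1 (by rwa [Int.natAbs_neg, Int.natAbs_natCast]), ?_⟩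
    rw [h, ← hmk]; push_cast; ring

theorem Rat.exists_squarefree_mul_sq {q : ℚ} (hq : q ≠ 0) :
    ∃ (m : ℤ) (s : ℚ), Squarefree m ∧ s ≠ 0 ∧ q = m * s ^ 2 := by
  obtain ⟨m, k, hm, hmk⟩ := Int.exists_squarefree_mul_sq (q.num * q.den)
  have hden : (q.den : ℚ) ≠ 0 := by positivity
  have hq' : q = m * (k / q.den) ^ 2 := by
    rw [div_pow, ← mul_div_assoc, eq_div_iff (pow_ne_zero 2 hden)]
    have := congrArg (Int.cast : ℤ → ℚ) hmk
    push_cast at this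
    rw [← this, ← Rat.mul_den_eq_num]
    ring
  refine ⟨m, k / q.den, hm, fun hs => hq ?_, hq'⟩
  rw [hq', hs]
  ring

theorem HilbertIsotropic.isSquare_zmod_natAbs {a b : ℤ} (hb : Squarefree b)
    (h : ∀ (p : ℕ) [Fact p.Prime], HilbertIsotropic ℚ_[p] a b) : IsSquare (a : ZMod b.natAbs) :=
  ZMod.isSquare_intCast_of_squarefree (Int.squarefree_natAbs.2 hb) fun p hp hpb =>
    have : Fact p.Prime := ⟨hp⟩
    (h p).isSquare_zmod hb (Int.natCast_dvd.2 hpb)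

theorem hilbertIsotropic_int_of_forall_padic {a b : ℤ} (ha : Squarefree a) (hb : Squarefree b)
    (h : ∀ (p : ℕ) [Fact p.Prime], HilbertIsotropic ℚ_[p] a b) : HilbertIsotropic ℚ a b := by
  induction hn : a.natAbs + b.natAbs using Nat.strong_induction_on generalizing a b with
  | _ n ih =>
  wlog hab : a.natAbs ≤ b.natAbs generalizing a b
  · exact (this hb ha (fun p _ => (h p).symm) (by omega) (by omega)).symm
  have ha0 := ha.ne_zero
  have hb0 := hb.ne_zero
  by_cases hb2 : b.natAbs < 2
  · obtain rfl | rfl : a = 1 ∨ a = -1 := by omega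
    · exact .of_sq (t := 1) (by simp)
    obtain rfl | rfl : b = 1 ∨ b = -1 := by omega
    · exact (HilbertIsotropic.of_sq (t := 1) (by simp)).symm
    · exact absurd (by simpa using h 2) not_hilbertIsotropic_padic_two_neg_one
  obtain ⟨t, c, htc, hcb⟩ :=
    Int.exists_sq_sub_eq_mul_natAbs_lt hab (by omega) (HilbertIsotropic.isSquare_zmod_natAbs hb h)
  obtain ⟨m, k, hm, rfl⟩ := Int.exists_squarefree_mul_sq c
  rcases eq_or_ne k 0 with rfl | hk
  · exact .of_sq (t := (t : ℚ)) (by exact_mod_cast (by simpa [sub_eq_zero] using htc : t ^ 2 = a))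
  have transfer (K : Type) [Field K] [CharZero K] :
      HilbertIsotropic K a b ↔ HilbertIsotropic K a m := by
    rw [hilbertIsotropic_iff_of_sq_sub_eq_mul (t := (t : K)) (c := ((m * k ^ 2 : ℤ) : K))
      (by exact_mod_cast hb0) (by exact_mod_cast mul_ne_zero hm.ne_zero (pow_ne_zero 2 hk))
      (by exact_mod_cast htc), Int.cast_mul, Int.cast_pow,
      hilbertIsotropic_mul_sq_iff (Int.cast_ne_zero.2 hk)]
  have hmc : m.natAbs ≤ (m * k ^ 2).natAbs := by
    rw [Int.natAbs_mul, Int.natAbs_pow]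
    exact Nat.le_mul_of_pos_right _ (by positivity)
  exact (transfer ℚ).2 (ih _ (by omega) ha hm (fun p _ => (transfer ℚ_[p]).1 (h p)) rfl)

theorem hilbertIsotropic_rat_of_forall_padic {q r : ℚ}
    (h : ∀ (p : ℕ) [Fact p.Prime], HilbertIsotropic ℚ_[p] q r) : HilbertIsotropic ℚ q r := by
  rcases eq_or_ne q 0 with rfl | hq
  · exact hilbertIsotropic_zero_left
  rcases eq_or_ne r 0 with rfl | hr
  · exact hilbertIsotropic_zero_right
  obtain ⟨m, s, hm, hs, rfl⟩ := Rat.exists_squarefree_mul_sq hq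
  obtain ⟨n, u, hn, hu, rfl⟩ := Rat.exists_squarefree_mul_sq hr
  rw [hilbertIsotropic_mul_sq_mul_sq_iff hs hu]
  refine hilbertIsotropic_int_of_forall_padic hm hn fun p _ => ?_
  rw [← hilbertIsotropic_mul_sq_mul_sq_iff (s := (s : ℚ_[p])) (u := (u : ℚ_[p]))
    (by exact_mod_cast hs) (by exact_mod_cast hu)]
  exact_mod_cast h p

/-- If a ternary rational quadratic form has a nontrivial zero in `ℚ_p` for
every prime `p`, then it has a nontrivial zero in `ℚ`. -/
theorem stmt_9 (a b c d e f : ℚ)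
    (hp : ∀ (p : ℕ) [Fact p.Prime],
      ∃ x y z : ℚ_[p], ¬ (x = 0 ∧ y = 0 ∧ z = 0) ∧
        (a : ℚ_[p]) * x ^ 2 + (b : ℚ_[p]) * y ^ 2 + (c : ℚ_[p]) * z ^ 2 +
          (d : ℚ_[p]) * x * y + (e : ℚ_[p]) * x * z + (f : ℚ_[p]) * y * z = 0) :
    ∃ x y z : ℚ, ¬ (x = 0 ∧ y = 0 ∧ z = 0) ∧
      a * x ^ 2 + b * y ^ 2 + c * z ^ 2 + d * x * y + e * x * z + f * y * z = 0 := by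
  refine (ternaryFormIsotropic_iff a b c d e f).2
    (hilbertIsotropic_rat_of_forall_padic fun p _ => ?_)
  exact_mod_cast (ternaryFormIsotropic_iff (a : ℚ_[p]) b c d e f).1 (hp p)
end

section
/- Let a, b be nonzero integers. If for all but finitely many prime numbers l there exist integers x, y, both coprime to l, with l ∣ (a y² − b x²), then b/a is the square of a rational number; that is, there exists r ∈ ℚ with b = a·r². -/
/-!
If `a * b` is not a square in `ℤ`, some odd `k` has Jacobi symbol `J(a * b | k) = -1`: write
`|a * b| = 2 ^ e * m` with `m` odd and choose `k` modulo `8 * m` by the Chinese remainder theorem,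
as a quadratic nonresidue modulo a prime dividing `m` to an odd power when `m` is not a square,
and by a suitable residue modulo `8` otherwise. Since `J(a * b | ·)` is periodic modulo
`4 * |a * b|`, Dirichlet's theorem gives infinitely many primes `l` modulo which `a * b` is not a
square. But for all but finitely many `l`, `a * y ^ 2 ≡ b * x ^ 2` with `l ∤ x` makes
`a * b ≡ (a * y / x) ^ 2` a square modulo `l`. Hence `a * b = c ^ 2` and `b = a * (c / a) ^ 2`.
-/

open scoped NumberTheorySymbols
open ZMod (χ₄ χ₈)

theorem Nat.isSquare_of_forall_even_factorization {m : ℕ}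
    (h : ∀ p, Even (m.factorization p)) : IsSquare m := by
  rcases eq_or_ne m 0 with rfl | hm
  · exact ⟨0, rfl⟩
  refine ⟨m.factorization.prod fun p e => p ^ (e / 2), ?_⟩
  conv_lhs => rw [← Nat.prod_factorization_pow_eq_self hm]
  rw [Finsupp.prod, Finsupp.prod, ← Finset.prod_mul_distrib]
  refine Finset.prod_congr rfl fun p _ => ?_
  rw [← pow_add, ← two_mul, Nat.two_mul_div_two_of_even (h p)]

theorem Nat.exists_mod_eight_eq_and_modEq {m : ℕ} (hm : Odd m) {r : ℕ} (hr : r < 8) (c : ℕ) :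
    ∃ b, b % 8 = r ∧ b ≡ c [MOD m] := by
  obtain ⟨b, hb8, hbm⟩ := Nat.chineseRemainder (Nat.Coprime.pow_left 3 hm.coprime_two_left) r c
  exact ⟨b, Eq.trans hb8 (Nat.mod_eq_of_lt hr), hbm⟩

theorem jacobiSym_neg_left {b : ℕ} (hb : Odd b) (x : ℤ) : J(-x | b) = χ₄ b * J(x | b) := by
  rw [neg_eq_neg_one_mul, jacobiSym.mul_left, jacobiSym.at_neg_one hb]

theorem jacobiSym_two_pow_mul_left {b : ℕ} (hb : Odd b) (e : ℕ) (x : ℤ) :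
    J(2 ^ e * x | b) = χ₈ b ^ e * J(x | b) := by
  rw [jacobiSym.mul_left, jacobiSym.pow_left, jacobiSym.at_two hb]

theorem exists_jacobiSym_eq_neg_one_of_odd_factorization {m q : ℕ} (hm : m ≠ 0) (hq : q.Prime)
    (hq2 : q ≠ 2) (hodd : Odd (m.factorization q)) : ∃ c : ℕ, J(c | m) = -1 := by
  have : Fact q.Prime := ⟨hq⟩
  obtain ⟨x, hx⟩ := FiniteField.exists_nonsquare (F := ZMod q) (by rwa [ZMod.ringChar_zmod_n])
  obtain ⟨c, hcq, hcm⟩ := Nat.chineseRemainder (Nat.coprime_ordCompl hq hm) x.val 1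
  refine ⟨c, ?_⟩
  have hJq : J(c | q) = -1 := by
    rw [← jacobiSym.legendreSym.to_jacobiSym, legendreSym.eq_neg_one_iff',
      (ZMod.natCast_eq_natCast_iff _ _ _).2 hcq, ZMod.natCast_zmod_val]
    exact hx
  have hJm : J(c | ordCompl[q] m) = 1 := by
    rw [jacobiSym.mod_left' (show (c : ℤ) % _ = (1 : ℤ) % _ by exact_mod_cast hcm),
      jacobiSym.one_left]
  rw [← Nat.ordProj_mul_ordCompl_eq_self m q, jacobiSym.mul_right', jacobiSym.pow_right, hJq, hJm,
    hodd.neg_one_pow, mul_one]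
  · exact pow_ne_zero _ hq.ne_zero
  · exact (Nat.ordCompl_pos q hm).ne'

theorem exists_jacobiSym_eq_neg_one_of_not_isSquare {m : ℕ} (hm : Odd m) (hsq : ¬IsSquare m) :
    ∃ c : ℕ, J(c | m) = -1 := by
  obtain ⟨q, hodd⟩ : ∃ q, Odd (m.factorization q) := by
    by_contra! h
    exact hsq (Nat.isSquare_of_forall_even_factorization fun p => Nat.not_odd_iff_even.1 (h p))
  have hq : q.Prime := Nat.prime_of_mem_primeFactors (Finsupp.mem_support_iff.2 hodd.pos.ne')
  have hq2 : q ≠ 2 := by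
    rintro rfl
    rw [Nat.factorization_eq_zero_of_not_dvd hm.not_two_dvd_nat] at hodd
    exact Nat.not_odd_zero hodd
  exact exists_jacobiSym_eq_neg_one_of_odd_factorization hm.pos.ne' hq hq2 hodd

theorem exists_odd_jacobiSym_eq_neg_one_of_natAbs_eq_two_pow_mul_sq {n : ℤ} (hn : ¬IsSquare n)
    {e t : ℕ} (ht : Odd t) (hnt : n.natAbs = 2 ^ e * (t * t)) :
    ∃ b : ℕ, Odd b ∧ J(n | b) = -1 := by
  have hJt : ∀ b : ℕ, b ≡ 1 [MOD t] → J(t * t | b) = 1 := fun b hb => by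
    have hbt : Nat.Coprime t b := by simpa [Nat.coprime_comm, Nat.Coprime] using hb.gcd_eq
    rw [← pow_two]
    exact jacobiSym.sq_one' (by simpa [Int.gcd_natCast_natCast] using hbt)
  have hsign : n = 2 ^ e * (t * t) ∨ n = -(2 ^ e * (t * t)) := by
    exact_mod_cast hnt ▸ Int.natAbs_eq n
  rcases hsign with rfl | rfl
  · have he : Odd e := by
      by_contra! he
      obtain ⟨k, rfl⟩ := Nat.not_odd_iff_even.1 he
      exact hn ⟨2 ^ k * t, by ring⟩
    obtain ⟨b, hb8, hbt⟩ := Nat.exists_mod_eight_eq_and_modEq ht (by norm_num : 5 < 8) 1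
    have hb : Odd b := Nat.odd_iff.2 (by omega)
    refine ⟨b, hb, ?_⟩
    rw [jacobiSym_two_pow_mul_left hb, hJt b hbt, ZMod.χ₈_nat_mod_eight, hb8, mul_one]
    exact he.neg_one_pow
  · obtain ⟨b, hb8, hbt⟩ := Nat.exists_mod_eight_eq_and_modEq ht (by norm_num : 7 < 8) 1
    have hb : Odd b := Nat.odd_iff.2 (by omega)
    refine ⟨b, hb, ?_⟩
    rw [jacobiSym_neg_left hb, jacobiSym_two_pow_mul_left hb, hJt b hbt,
      ZMod.χ₄_nat_three_mod_four (by omega), ZMod.χ₈_nat_mod_eight, hb8]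
    simp

theorem exists_odd_jacobiSym_eq_neg_one_of_natAbs_eq_two_pow_mul {n : ℤ} {e m : ℕ} (hm : Odd m)
    (hmsq : ¬IsSquare m) (hnm : n.natAbs = 2 ^ e * m) : ∃ b : ℕ, Odd b ∧ J(n | b) = -1 := by
  obtain ⟨c, hc⟩ := exists_jacobiSym_eq_neg_one_of_not_isSquare hm hmsq
  obtain ⟨b, hb8, hbm⟩ := Nat.exists_mod_eight_eq_and_modEq hm (by norm_num : 1 < 8) c
  have hb : Odd b := Nat.odd_iff.2 (by omega)
  refine ⟨b, hb, ?_⟩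
  have hJm : J(m | b) = -1 := by
    rw [jacobiSym.quadratic_reciprocity_one_mod_four' hm (by omega),
      jacobiSym.mod_left' (show (b : ℤ) % m = (c : ℤ) % m by exact_mod_cast hbm), hc]
  have hχ₈ : χ₈ b = 1 := by rw [ZMod.χ₈_nat_mod_eight, hb8]; rfl
  have hsign : n = 2 ^ e * m ∨ n = -(2 ^ e * m) := by exact_mod_cast hnm ▸ Int.natAbs_eq n
  rcases hsign with rfl | rfl
  · rw [jacobiSym_two_pow_mul_left hb, hJm, hχ₈, one_pow, one_mul]
  · rw [jacobiSym_neg_left hb, jacobiSym_two_pow_mul_left hb, hJm, hχ₈,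
      ZMod.χ₄_nat_one_mod_four (by omega)]
    norm_num

theorem exists_odd_jacobiSym_eq_neg_one_of_not_isSquare {n : ℤ} (hn : ¬IsSquare n) :
    ∃ b : ℕ, Odd b ∧ J(n | b) = -1 := by
  have hn0 : n.natAbs ≠ 0 := fun h => hn ⟨0, by simpa using h⟩
  obtain ⟨e, m, hm, hnm⟩ := Nat.exists_eq_two_pow_mul_odd hn0
  by_cases hmsq : IsSquare m
  · obtain ⟨t, rfl⟩ := hmsq
    exact exists_odd_jacobiSym_eq_neg_one_of_natAbs_eq_two_pow_mul_sq hn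
      (Nat.Odd.of_mul_left hm) hnm
  · exact exists_odd_jacobiSym_eq_neg_one_of_natAbs_eq_two_pow_mul hm hmsq hnm

theorem Int.infinite_setOf_prime_not_isSquare {n : ℤ} (hn : ¬IsSquare n) :
    {p : ℕ | p.Prime ∧ ¬IsSquare (n : ZMod p)}.Infinite := by
  obtain ⟨b, hb, hJ⟩ := exists_odd_jacobiSym_eq_neg_one_of_not_isSquare hn
  have hn0 : n.natAbs ≠ 0 := fun h => hn ⟨0, by simpa using h⟩
  have hnb : n.natAbs.Coprime b := by
    by_contra h
    rw [jacobiSym.eq_zero_iff.2 ⟨hb.pos.ne', h⟩] at hJ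
    exact absurd hJ (by decide)
  have hb4n : b.Coprime (4 * n.natAbs) :=
    Nat.Coprime.mul_right (Nat.Coprime.pow_right 2 hb.coprime_two_right) hnb.symm
  refine (Nat.infinite_setOfPred_prime_and_modEq (by omega) hb4n).mono ?_
  rintro p ⟨hp, hpb⟩
  have : Fact p.Prime := ⟨hp⟩
  have hp_odd : Odd p := by
    have : p % 2 = b % 2 := hpb.of_dvd (Dvd.intro _ (by ring : 2 * (2 * n.natAbs) = 4 * n.natAbs))
    exact Nat.odd_iff.2 (this.trans (Nat.odd_iff.1 hb))
  refine ⟨hp, ZMod.nonsquare_of_jacobiSym_eq_neg_one ?_⟩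
  rwa [jacobiSym.mod_right n hp_odd, hpb, ← jacobiSym.mod_right n hb]

theorem isSquare_mul_of_mul_sq_eq_mul_sq {F : Type*} [Field F] {a b x y : F} (hx : x ≠ 0)
    (h : a * y ^ 2 = b * x ^ 2) : IsSquare (a * b) :=
  ⟨a * y / x, by field_simp; linear_combination -a * h⟩

theorem stmt_11_general (a b : ℤ) (ha : a ≠ 0)
    (h : {l : ℕ | l.Prime ∧ ¬ ∃ x y : ℤ, ¬ (l : ℤ) ∣ x ∧ ¬ (l : ℤ) ∣ y ∧
        (l : ℤ) ∣ (a * y ^ 2 - b * x ^ 2)}.Finite) :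
    ∃ r : ℚ, (b : ℚ) = (a : ℚ) * r ^ 2 := by
  obtain ⟨c, hc⟩ : IsSquare (a * b) := by
    by_contra hab
    obtain ⟨l, ⟨hl, hl_nonsq⟩, hl_sol⟩ :=
      ((Int.infinite_setOf_prime_not_isSquare hab).sdiff h).nonempty
    obtain ⟨x, y, hx, -, hxy⟩ := not_not.1 fun hno => hl_sol ⟨hl, hno⟩
    have : Fact l.Prime := ⟨hl⟩
    refine hl_nonsq ?_
    push_cast
    refine isSquare_mul_of_mul_sq_eq_mul_sq (x := (x : ZMod l)) (y := y) ?_ ?_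
    · rwa [Ne, ZMod.intCast_zmod_eq_zero_iff_dvd]
    · rw [← sub_eq_zero]
      exact_mod_cast (ZMod.intCast_zmod_eq_zero_iff_dvd _ l).2 hxy
  have hc : (a : ℚ) * b = c * c := by exact_mod_cast hc
  refine ⟨c / a, ?_⟩
  field_simp
  linear_combination hc

/-- If `a y² - b x²` has a zero mod `l` with `x, y` coprime to `l` for all but
finitely many primes `l`, then `b / a` is the square of a rational number. -/
theorem stmt_11 (a b : ℤ) (ha : a ≠ 0) (hb : b ≠ 0)
    (h : {l : ℕ | l.Prime ∧ ¬ ∃ x y : ℤ, ¬ (l : ℤ) ∣ x ∧ ¬ (l : ℤ) ∣ y ∧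
        (l : ℤ) ∣ (a * y ^ 2 - b * x ^ 2)}.Finite) :
    ∃ r : ℚ, (b : ℚ) = (a : ℚ) * r ^ 2 :=
  stmt_11_general a b ha h
end
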